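/- arXiv:1209.1074 — 9 statements merged into one kernel-verified Lean document; each statement's English description precedes it below -/
import Mathlib

section
/- Suppose a group G acts on a wallspace (X, W) (acting on X and on the index set compatibly) so that the underlying action on the metric space (X, d) is metrically proper (for each x ∈ X and r > 0 the set {g ∈ G : d(x, g·x) ≤ r} is finite) and by isometries, and suppose the Linear Separation Property holds: there exist constants κ > 0 and ε ≥ 0 such that #(x,y) ≥ κ·d(x,y) − ε for all x, y ∈ X, where #(x,y) denotes the number of walls separating x and y. Then for every x ∈ X and every n ∈ ℕ, the set {g ∈ G : #(x, g·x) ≤ n} is finite. (Since the distance in the dual cube complex between the canonical cubes of x and g·x equals #(x, g·x), this expresses that G acts metrically properly on the dual cube complex.) -/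
open Pointwise

/-- A wallspace on a set `X`: an indexed family of walls `W i = (U i, V i)` whose closed
halfspaces cover `X`, such that each point betwixts only finitely many walls, any two points
are separated by only finitely many walls, and there are no duplicate genuine partitions. -/
structure Wallspace (X : Type*) (ι : Type*) where
  U : ι → Set X
  V : ι → Set X
  cover : ∀ i, U i ∪ V i = Set.univ
  betwixt_finite : ∀ x : X, {i : ι | x ∈ U i ∩ V i}.Finite
  sep_finite : ∀ x y : X, {i : ι |
      (x ∈ U i \ V i ∧ y ∈ V i \ U i) ∨ (x ∈ V i \ U i ∧ y ∈ U i \ V i)}.Finite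
  no_dup_partition : ∀ i j, i ≠ j →
    ((U i = U j ∧ V i = V j) ∨ (U i = V j ∧ V i = U j)) →
    U i ∩ V i = ∅ → ¬((U i).Nonempty ∧ (V i).Nonempty)

namespace Wallspace

variable {X ι : Type*} (W : Wallspace X ι)

/-- The closed halfspace of wall `i` selected by `b` (`true ↦ U i`, `false ↦ V i`). -/
def side (i : ι) : Bool → Set X
  | true => W.U i
  | false => W.V i

/-- The open halfspace of wall `i` on the side `b`. -/
def openSide (i : ι) (b : Bool) : Set X :=
  W.side i b \ W.side i (!b)

/-- The wall `i` separates the points `x` and `y`: they lie in distinct open halfspaces. -/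
def Separates (i : ι) (x y : X) : Prop :=
  (x ∈ W.U i \ W.V i ∧ y ∈ W.V i \ W.U i) ∨
  (x ∈ W.V i \ W.U i ∧ y ∈ W.U i \ W.V i)

/-- A `0`-cube of the dual cube complex: an orientation `c` of the walls (where `c i` selects
the left halfspace `W.side i (c i)` of the wall `i`) such that any two left halfspaces meet
and every point lies in all but finitely many left halfspaces. -/
def IsZeroCube (c : ι → Bool) : Prop :=
  (∀ i j : ι, (W.side i (c i) ∩ W.side j (c j)).Nonempty) ∧
  (∀ x : X, {i : ι | x ∉ W.side i (c i)}.Finite)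

/-- Distinct walls `i ≠ j` are transverse if all four intersections of closed halfspaces
are nonempty. -/
def Transverse (i j : ι) : Prop :=
  i ≠ j ∧ (W.U i ∩ W.U j).Nonempty ∧ (W.U i ∩ W.V j).Nonempty ∧
    (W.V i ∩ W.U j).Nonempty ∧ (W.V i ∩ W.V j).Nonempty

/-- The wall `i` is reversible at the `0`-cube `c`: the orientation agreeing with `c` except
that the pair at `i` is swapped is again a `0`-cube. -/
def Reversible (c : ι → Bool) (i : ι) : Prop :=
  ∀ c' : ι → Bool, c' i = !(c i) → (∀ j, j ≠ i → c' j = c j) → W.IsZeroCube c'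

/-- The wall `i` crosses the subset `A` if `A` meets both closed halfspaces of `i`. -/
def Crosses (i : ι) (A : Set X) : Prop :=
  (A ∩ W.U i).Nonempty ∧ (A ∩ W.V i).Nonempty

/-- The wall `k` separates the walls `i` and `j`: some closed halfspace of `i` and some
closed halfspace of `j` lie in distinct open halfspaces of `k`. -/
def SeparatesWalls (k i j : ι) : Prop :=
  k ≠ i ∧ k ≠ j ∧ ∃ a bi bj : Bool,
    W.side i bi ⊆ W.openSide k a ∧ W.side j bj ⊆ W.openSide k (!a)

/-- Distinct walls `i`, `j` osculate if they are not transverse and no wall separates them. -/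
def Osculate (i j : ι) : Prop :=
  i ≠ j ∧ ¬ W.Transverse i j ∧ ∀ k : ι, ¬ W.SeparatesWalls k i j

/-- Two `0`-cubes are adjacent if they differ at exactly one wall index. -/
def Adjacent (c d : ι → Bool) : Prop :=
  W.IsZeroCube c ∧ W.IsZeroCube d ∧ ∃! i : ι, c i ≠ d i

end Wallspace

/-- A group `G` acts on the wallspace `W` if it acts on `X` and on the index set so that
the unordered pair of halfspaces of `g • i` is the `g`-translate of that of `i`. -/
def WallspaceAction (G : Type*) [Group G] {X ι : Type*} [MulAction G X] [MulAction G ι]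
    (W : Wallspace X ι) : Prop :=
  ∀ (g : G) (i : ι),
    (W.U (g • i) = g • W.U i ∧ W.V (g • i) = g • W.V i) ∨
    (W.U (g • i) = g • W.V i ∧ W.V (g • i) = g • W.U i)

theorem Set.Finite.setOf_le_of_linear_lower_bound {α : Type*} {d f : α → ℝ}
    (hd : ∀ r : ℝ, 0 < r → {a : α | d a ≤ r}.Finite) {κ ε : ℝ} (hκ : 0 < κ)
    (hlb : ∀ a, κ * d a - ε ≤ f a) (t : ℝ) : {a : α | f a ≤ t}.Finite := by
  -- `max _ 1` keeps the radius positive even when `t + ε ≤ 0`.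
  refine (hd (max ((t + ε) / κ) 1) (lt_max_of_lt_right one_pos)).subset fun a ha => ?_
  have hdist : d a ≤ (t + ε) / κ := by
    rw [le_div_iff₀ hκ]
    linarith [hlb a, show f a ≤ t from ha]
  exact hdist.trans (le_max_left _ _)

theorem linear_separation_implies_metrically_proper_general
    {G X ι : Type*} [Group G] [MetricSpace X] [MulAction G X]
    (W : Wallspace X ι)
    (hproper : ∀ (x : X) (r : ℝ), 0 < r → {g : G | dist x (g • x) ≤ r}.Finite)
    (κ ε : ℝ) (hκ : 0 < κ)
    (hls : ∀ x y : X, κ * dist x y - ε ≤ ({i : ι | W.Separates i x y}.ncard : ℝ)) :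
    ∀ (x : X) (n : ℕ), {g : G | {i : ι | W.Separates i x (g • x)}.ncard ≤ n}.Finite := by
  intro x n
  have hfin := Set.Finite.setOf_le_of_linear_lower_bound (hproper x) hκ
    (fun g => hls x (g • x)) n
  simpa only [Nat.cast_le] using hfin

/-- **Linear Separation implies metric properness of the dual action.**
If `G` acts on a wallspace `(X, W)`, the underlying action on the metric space `X` is by
isometries and metrically proper, and the Linear Separation Property holds
(`#(x,y) ≥ κ·d(x,y) − ε` with `κ > 0`, `ε ≥ 0`), then for every `x` and `n` the set of `g`
with `#(x, g·x) ≤ n` is finite; i.e. `G` acts metrically properly on the dual cube complex. -/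
theorem linear_separation_implies_metrically_proper
    {G X ι : Type*} [Group G] [MetricSpace X] [MulAction G X] [MulAction G ι]
    (W : Wallspace X ι) (hact : WallspaceAction G W)
    (hiso : ∀ (g : G) (x y : X), dist (g • x) (g • y) = dist x y)
    (hproper : ∀ (x : X) (r : ℝ), 0 < r → {g : G | dist x (g • x) ≤ r}.Finite)
    (κ ε : ℝ) (hκ : 0 < κ) (hε : 0 ≤ ε)
    (hls : ∀ x y : X, κ * dist x y - ε ≤ ({i : ι | W.Separates i x y}.ncard : ℝ)) :
    ∀ (x : X) (n : ℕ), {g : G | {i : ι | W.Separates i x (g • x)}.ncard ≤ n}.Finite :=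
  linear_separation_implies_metrically_proper_general W hproper κ ε hκ hls
end

section
/- (Axis Separation) Let a group G act on a wallspace (X, W) (acting on X and on the index set compatibly). Let g ∈ G and let i₀ be a wall index with closed halfspaces U = U i₀ and V = V i₀ such that: (1) gⁿ·i₀ ≠ i₀ for every integer n ≠ 0; (2) U ∩ gⁿ·U ≠ ∅ for every integer n; (3) V ∩ gⁿ·V ≠ ∅ for every integer n. If there exists a 0-cube c of the dual cube complex with g·c = c, then for all integers k ≠ m the walls g^k·i₀ and g^m·i₀ are transverse; in particular (X, W) contains an infinite collection of pairwise transverse walls. -/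
open Pointwise

/-!
If `U ∩ gⁿ·V = ∅` for some `n ≠ 0`, then `gⁿ·V ⊆ V` and `g⁻ⁿ·U ⊆ U`, because `U ∪ V = X`.
Whichever of `U`, `V` the `g`-invariant `0`-cube `c` selects at `i₀`, iterating the matching
inclusion nests the selected halfspaces of the infinitely many walls `g^{±kn}·i₀` inside the one
at `i₀`. A point outside that halfspace then lies outside all of them, against the finiteness
condition on `0`-cubes. With `U ∩ gⁿ·U` and `V ∩ gⁿ·V` nonempty by hypothesis, translating by `g^k`
shows that `g^k·i₀` and `g^(k+n)·i₀` are transverse.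
-/

open Function Set

theorem Set.pow_smul_subset_of_smul_subset {M α : Type*} [Monoid M] [MulAction M α]
    {a : M} {s : Set α} (h : a • s ⊆ s) (k : ℕ) : a ^ k • s ⊆ s := by
  induction k with
  | zero => simp
  | succ k ih =>
    rw [pow_succ, mul_smul]
    exact (smul_set_mono h).trans ih

theorem Set.smul_subset_of_disjoint_of_union_eq_univ {G α : Type*} [Group G] [MulAction G α]
    {s t : Set α} {a : G} (hst : s ∪ t = univ) (hd : Disjoint s (a • t)) : a • t ⊆ t :=
  hd.subset_compl_left.trans (compl_subset_iff_union.2 hst)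

theorem Set.smul_inter_smul_nonempty_iff {G α : Type*} [Group G] [MulAction G α]
    {s t : Set α} (a b : G) : (a • s ∩ b • t).Nonempty ↔ (s ∩ (a⁻¹ * b) • t).Nonempty := by
  rw [← smul_set_nonempty (s := s ∩ _) (a := a), smul_set_inter, smul_smul, mul_inv_cancel_left]

theorem injective_zpow_smul_of_zpow_smul_ne {G α : Type*} [Group G] [MulAction G α]
    {g : G} {x : α} (h : ∀ n : ℤ, n ≠ 0 → g ^ n • x ≠ x) : Injective fun n : ℤ => g ^ n • x := by
  intro m n hmn
  by_contra hne
  apply h (-n + m) (by omega)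
  simp only at hmn
  rw [zpow_add, mul_smul, hmn, ← mul_smul, ← zpow_add, neg_add_cancel, zpow_zero, one_smul]

theorem injective_pow_zpow_smul {G α : Type*} [Group G] [MulAction G α] {g : G} {x : α}
    (h : Injective fun n : ℤ => g ^ n • x) {n : ℤ} (hn : n ≠ 0) :
    Injective fun k : ℕ => (g ^ n) ^ k • x := by
  intro k l hkl
  have : n * k = n * l := h (by simpa only [← zpow_natCast, ← zpow_mul] using hkl)
  exact_mod_cast mul_left_cancel₀ hn this

namespace Wallspace

variable {X ι G : Type*} (W : Wallspace X ι)

theorem side_union_side_not (i : ι) (b : Bool) : W.side i b ∪ W.side i (!b) = univ := by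
  cases b
  · rw [union_comm]; exact W.cover i
  · exact W.cover i

theorem transverse_iff_forall_side (i j : ι) :
    W.Transverse i j ↔ i ≠ j ∧ ∀ b b' : Bool, (W.side i b ∩ W.side j b').Nonempty := by
  simp only [Transverse, Bool.forall_bool, side]
  tauto

variable [Group G] [MulAction G X] [MulAction G ι]

/-- The elements `g` with `g · c = c`, read on the selected halfspaces. -/
def orientationStabilizer (c : ι → Bool) : Subgroup G where
  carrier := {g | ∀ i, W.side (g • i) (c (g • i)) = g • W.side i (c i)}
  one_mem' i := by simp
  mul_mem' {g h} hg hh i := by rw [mul_smul, hg, hh, smul_smul]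
  inv_mem' {g} hg i := by
    rw [eq_inv_smul_iff, ← hg (g⁻¹ • i), smul_inv_smul]

variable {W}

theorem IsZeroCube.not_smul_side_subset {c : ι → Bool} (hc : W.IsZeroCube c) {h : G}
    (hh : h ∈ W.orientationStabilizer c) {i : ι} (hi : Injective fun k : ℕ => h ^ k • i)
    {x : X} (hx : x ∉ W.side i (c i)) : ¬ h • W.side i (c i) ⊆ W.side i (c i) := by
  intro hsub
  refine (hc.2 x).not_infinite (infinite_of_injective_forall_mem hi fun k => ?_)
  change x ∉ W.side (h ^ k • i) (c (h ^ k • i))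
  rw [pow_mem hh k i]
  exact fun hxk => hx (pow_smul_subset_of_smul_subset hsub k hxk)

theorem IsZeroCube.nonempty_side_inter_zpow_smul_side_not {c : ι → Bool} (hc : W.IsZeroCube c)
    {g : G} (hg : g ∈ W.orientationStabilizer c) {i : ι} (hi : Injective fun n : ℤ => g ^ n • i)
    {n : ℤ} (hn : n ≠ 0) {b : Bool} (hb : (W.side i b).Nonempty) (hb' : (W.side i !b).Nonempty) :
    (W.side i b ∩ g ^ n • W.side i !b).Nonempty := by
  rw [← not_disjoint_iff_nonempty_inter]
  intro hdisj
  have hdisj' : Disjoint (W.side i !b) ((g ^ n)⁻¹ • W.side i b) := by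
    rw [← disjoint_smul_set (a := g ^ n), smul_inv_smul]
    exact hdisj.symm
  rcases Bool.eq_or_eq_not (c i) b with hci | hci
  · obtain ⟨x, hx⟩ := hb'.smul_set (a := g ^ n)
    refine hc.not_smul_side_subset (i := i) (x := x) (inv_mem (zpow_mem hg n)) ?_ ?_ ?_
    · rw [← zpow_neg]; exact injective_pow_zpow_smul hi (neg_ne_zero.2 hn)
    · rw [hci]; exact hdisj.notMem_of_mem_right hx
    · rw [hci]
      exact smul_subset_of_disjoint_of_union_eq_univ
        ((union_comm _ _).trans (W.side_union_side_not i b)) hdisj'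
  · obtain ⟨x, hx⟩ := hb.smul_set (a := (g ^ n)⁻¹)
    refine hc.not_smul_side_subset (i := i) (x := x) (zpow_mem hg n)
      (injective_pow_zpow_smul hi hn) ?_ ?_
    · rw [hci]; exact hdisj'.notMem_of_mem_right hx
    · rw [hci]
      exact smul_subset_of_disjoint_of_union_eq_univ (W.side_union_side_not i b) hdisj

end Wallspace

theorem WallspaceAction.exists_side_smul_eq {G X ι : Type*} [Group G] [MulAction G X]
    [MulAction G ι] {W : Wallspace X ι} (hact : WallspaceAction G W) (g : G) (i : ι) (b : Bool) :
    ∃ b' : Bool, W.side (g • i) b = g • W.side i b' := by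
  rcases hact g i with ⟨hU, hV⟩ | ⟨hU, hV⟩ <;> cases b
  exacts [⟨false, hV⟩, ⟨true, hU⟩, ⟨true, hV⟩, ⟨false, hU⟩]

/-- **Axis Separation.** Suppose `G` acts on a wallspace `(X, W)`, `g ∈ G`, and `i₀` is a
wall index with halfspaces `U = U i₀`, `V = V i₀` such that `gⁿ·i₀ ≠ i₀` for `n ≠ 0`,
`U ∩ gⁿ·U ≠ ∅` and `V ∩ gⁿ·V ≠ ∅` for all `n : ℤ`.  If `g` fixes a `0`-cube `c` of the dual
cube complex, then the walls `g^k·i₀` (`k : ℤ`) are pairwise transverse; in particular the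
wallspace contains an infinite collection of pairwise transverse walls. -/
theorem axis_separation
    {G X ι : Type*} [Group G] [MulAction G X] [MulAction G ι]
    (W : Wallspace X ι) (hact : WallspaceAction G W)
    (g : G) (i₀ : ι)
    (h1 : ∀ n : ℤ, n ≠ 0 → (g ^ n) • i₀ ≠ i₀)
    (h2 : ∀ n : ℤ, (W.U i₀ ∩ (g ^ n) • W.U i₀).Nonempty)
    (h3 : ∀ n : ℤ, (W.V i₀ ∩ (g ^ n) • W.V i₀).Nonempty)
    (c : ι → Bool) (hc : W.IsZeroCube c)
    (hfix : ∀ i : ι, W.side (g • i) (c (g • i)) = g • W.side i (c i) ∧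
      W.side (g • i) (!(c (g • i))) = g • W.side i (!(c i))) :
    (∀ k m : ℤ, k ≠ m → W.Transverse ((g ^ k) • i₀) ((g ^ m) • i₀)) ∧
    ∃ T : Set ι, T.Infinite ∧ T.Pairwise W.Transverse := by
  have hinj := injective_zpow_smul_of_zpow_smul_ne h1
  have hg : g ∈ W.orientationStabilizer c := fun i => (hfix i).1
  have hU : (W.side i₀ true).Nonempty := (h2 0).mono inter_subset_left
  have hV : (W.side i₀ false).Nonempty := (h3 0).mono inter_subset_left
  have hsides : ∀ n : ℤ, n ≠ 0 → ∀ b b' : Bool, (W.side i₀ b ∩ g ^ n • W.side i₀ b').Nonempty := by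
    intro n hn b b'
    cases b <;> cases b'
    exacts [h3 n, hc.nonempty_side_inter_zpow_smul_side_not hg hinj hn hV hU,
      hc.nonempty_side_inter_zpow_smul_side_not hg hinj hn hU hV, h2 n]
  have htrans : ∀ k m : ℤ, k ≠ m → W.Transverse ((g ^ k) • i₀) ((g ^ m) • i₀) := by
    intro k m hkm
    refine (W.transverse_iff_forall_side _ _).2 ⟨hinj.ne hkm, fun b b' => ?_⟩
    obtain ⟨β, hβ⟩ := hact.exists_side_smul_eq (g ^ k) i₀ b
    obtain ⟨β', hβ'⟩ := hact.exists_side_smul_eq (g ^ m) i₀ b'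
    rw [hβ, hβ', smul_inter_smul_nonempty_iff, ← zpow_neg, ← zpow_add, neg_add_eq_sub]
    exact hsides _ (sub_ne_zero.2 hkm.symm) β β'
  refine ⟨htrans, range fun n : ℤ => g ^ n • i₀, infinite_range_of_injective hinj, ?_⟩
  rintro _ ⟨k, rfl⟩ _ ⟨m, rfl⟩ hne
  exact htrans k m (by rintro rfl; exact hne rfl)
end

section
/- (Bounded packing implies finite dimension) Let G be a group with finite generating set S acting on a wallspace (X, W) (acting on X and on the index set compatibly) with only finitely many G-orbits of wall indices. Suppose there are only finitely many G-orbits of unordered pairs of transverse walls, and suppose that for each wall index i the stabilizer Stab_G(i) has bounded packing in G. Then there exists k such that every collection of pairwise transverse walls of (X, W) has cardinality at most k (equivalently, the wallspace has the k-Plane Intersection Property, so the dual cube complex is finite dimensional). -/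
open Pointwise

/-- `g` is a product of fewer than `D` elements of `S ∪ S⁻¹`. -/
def HasWordLengthLT {G : Type*} [Group G] (S : Set G) (g : G) (D : ℝ) : Prop :=
  ∃ l : List G, (∀ a ∈ l, a ∈ S ∨ a⁻¹ ∈ S) ∧ l.prod = g ∧ (l.length : ℝ) < D

/-- Subsets `A`, `B` of `G` are `D`-close with respect to the generating set `S`. -/
def DClose {G : Type*} [Group G] (S : Set G) (D : ℝ) (A B : Set G) : Prop :=
  ∃ a ∈ A, ∃ b ∈ B, HasWordLengthLT S (a⁻¹ * b) D

/-- `H` has bounded packing in `G` (with respect to the generating set `S`): for each `D > 0`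
there exists `k` such that every collection of pairwise `D`-close left cosets of `H` has
cardinality at most `k`. -/
def BoundedPacking {G : Type*} [Group G] (S : Set G) (H : Subgroup G) : Prop :=
  ∀ D : ℝ, 0 < D → ∃ k : ℕ, ∀ C : Set (Set G),
    (∀ A ∈ C, ∃ g : G, A = g • (H : Set G)) →
    C.Pairwise (DClose S D) → C.Finite ∧ C.ncard ≤ k

/-- The frontier of `A ⊆ G` with respect to the finite generating set `S`. -/
def frontierIn {G : Type*} [Group G] (S : Finset G) (A : Set G) : Set G :=
  {a : G | a ∈ A ∧ ∃ s : G, (s ∈ S ∨ s⁻¹ ∈ S) ∧ a * s ∉ A}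

/-- `A` is `H`-finite: `A ⊆ H · F` for some finite `F`. -/
def HSetFinite {G : Type*} [Group G] (H : Set G) (A : Set G) : Prop :=
  ∃ F : Finset G, A ⊆ H * (F : Set G)

/-- An `H`-wall `{U, V}` in `G`: the halfspaces cover `G`, the pair is `H`-invariant,
`U ∩ V` is `H`-finite, and `U` and `V` have `Ḧ`-finite frontiers, where
`Ḧ = {h ∈ H : hU = U ∧ hV = V}`. -/
structure IsHWall {G : Type*} [Group G] (S : Finset G) (H : Subgroup G)
    (U V : Set G) : Prop where
  cover : U ∪ V = Set.univ
  invar : ∀ h ∈ H, (h • U = U ∧ h • V = V) ∨ (h • U = V ∧ h • V = U)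
  inter_hfinite : HSetFinite (H : Set G) (U ∩ V)
  frontierU : HSetFinite {h : G | h ∈ H ∧ h • U = U ∧ h • V = V} (frontierIn S U)
  frontierV : HSetFinite {h : G | h ∈ H ∧ h • U = U ∧ h • V = V} (frontierIn S V)

/-!
Fix an orbit `G • a` of walls. A wall `i = g • a` determines the left coset
`{x | x • a = i} = g • Stab(a)`, and distinct walls give distinct cosets. If `i = g • p₁` and
`j = g • p₂` with `(p₁, p₂)` one of the finitely many representative pairs, and `pₖ = tₖ • a`,
then `g tₖ` lies in the coset of the `k`-th wall, and `(g t₁)⁻¹ (g t₂) = t₁⁻¹ t₂` ranges over a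
finite set independent of `g`. So pairwise transverse walls of one orbit give pairwise
`D`-close cosets of `Stab(a)` for one `D`, and bounded packing bounds their number; summing
over the finitely many orbits gives the bound.
-/

open MulAction

section WordLength

variable {G : Type*} [Group G] {S : Set G}

lemma exists_hasWordLengthLT_of_mem_closure {g : G} (hg : g ∈ Subgroup.closure S) :
    ∃ D : ℝ, HasWordLengthLT S g D := by
  rw [← Subgroup.mem_toSubmonoid, Subgroup.closure_toSubmonoid] at hg
  obtain ⟨l, hl, rfl⟩ := Submonoid.exists_list_of_mem_closure hg
  exact ⟨l.length + 1, l, fun x hx => hl x hx, rfl, lt_add_one _⟩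

lemma HasWordLengthLT.mono {g : G} {D D' : ℝ} (h : HasWordLengthLT S g D) (hD : D ≤ D') :
    HasWordLengthLT S g D' :=
  let ⟨l, hl, hprod, hlen⟩ := h
  ⟨l, hl, hprod, hlen.trans_le hD⟩

lemma exists_forall_hasWordLengthLT_of_closure_eq_top (hS : Subgroup.closure S = ⊤)
    (E : Finset G) : ∃ D : ℝ, 0 < D ∧ ∀ e ∈ E, HasWordLengthLT S e D := by
  choose D hD using fun g : G => exists_hasWordLengthLT_of_mem_closure (hS ▸ Subgroup.mem_top g)
  refine ⟨1 + ∑ e ∈ E, |D e|, by positivity, fun e he => (hD e).mono ?_⟩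
  calc D e ≤ |D e| := le_abs_self _
    _ ≤ ∑ e ∈ E, |D e| := Finset.single_le_sum (fun e _ => abs_nonneg (D e)) he
    _ ≤ 1 + ∑ e ∈ E, |D e| := le_add_of_nonneg_left zero_le_one

end WordLength

section OrbitPacking

variable {G α : Type*} [Group G] [MulAction G α] {S : Set G}

lemma setOf_smul_eq_smul_eq_smul_stabilizer (a : α) (g : G) :
    {x : G | x • a = g • a} = g • (stabilizer G a : Set G) := by
  ext x
  rw [mem_leftCoset_iff, SetLike.mem_coe, mem_stabilizer_iff, mul_smul, inv_smul_eq_iff]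
  exact Iff.rfl

lemma dClose_setOf_smul_eq {D : ℝ} (a : α) (g t₁ t₂ : G)
    (h : HasWordLengthLT S (t₁⁻¹ * t₂) D) :
    DClose S D {x : G | x • a = g • t₁ • a} {x : G | x • a = g • t₂ • a} :=
  ⟨g * t₁, mul_smul g t₁ a, g * t₂, mul_smul g t₂ a, by rwa [mul_inv_rev, mul_assoc,
    inv_mul_cancel_left]⟩

lemma BoundedPacking.exists_ncard_le_of_pairwise_dClose {a : α}
    (hbp : BoundedPacking S (stabilizer G a)) {D : ℝ} (hD : 0 < D) :
    ∃ k : ℕ, ∀ T ⊆ orbit G a,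
      T.Pairwise (fun i j => DClose S D {x : G | x • a = i} {x : G | x • a = j}) →
      T.Finite ∧ T.ncard ≤ k := by
  obtain ⟨k, hk⟩ := hbp D hD
  refine ⟨k, fun T hT hclose => ?_⟩
  set φ : α → Set G := fun i => {x : G | x • a = i}
  have hinj : T.InjOn φ := by
    intro i hi j _ hij
    obtain ⟨g, rfl⟩ := hT hi
    show g ∈ φ j
    rw [← hij]
    rfl
  have hcosets : ∀ A ∈ φ '' T, ∃ g : G, A = g • (stabilizer G a : Set G) := by
    rintro _ ⟨i, hi, rfl⟩
    obtain ⟨g, rfl⟩ := hT hi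
    exact ⟨g, setOf_smul_eq_smul_eq_smul_stabilizer a g⟩
  obtain ⟨hfin, hcard⟩ := hk (φ '' T) hcosets (hinj.pairwise_image.2 hclose)
  exact ⟨hfin.of_finite_image hinj, hinj.ncard_image ▸ hcard⟩

lemma exists_dClose_setOf_smul_eq_of_finite_orbit_pairs (hS : Subgroup.closure S = ⊤)
    {r : α → α → Prop} {P : Finset (α × α)}
    (hP : ∀ i j, r i j → ∃ g : G, ∃ p ∈ P,
      (i = g • p.1 ∧ j = g • p.2) ∨ (i = g • p.2 ∧ j = g • p.1)) (a : α) :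
    ∃ D : ℝ, 0 < D ∧ ∀ i ∈ orbit G a, ∀ j ∈ orbit G a, r i j →
      DClose S D {x : G | x • a = i} {x : G | x • a = j} := by
  classical
  have hrep : ∀ p : α, ∃ t : G, p ∈ orbit G a → t • a = p := fun p => by
    by_cases hp : p ∈ orbit G a
    · obtain ⟨t, ht⟩ := hp
      exact ⟨t, fun _ => ht⟩
    · exact ⟨1, fun h => absurd h hp⟩
  choose t ht using hrep
  set Q := P.image Prod.fst ∪ P.image Prod.snd
  obtain ⟨D, hD, hE⟩ := exists_forall_hasWordLengthLT_of_closure_eq_top hS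
    ((Q ×ˢ Q).image fun q => (t q.1)⁻¹ * t q.2)
  refine ⟨D, hD, fun i hi j hj hij => ?_⟩
  have hpair : ∃ g : G, ∃ p₁ ∈ Q, ∃ p₂ ∈ Q, i = g • p₁ ∧ j = g • p₂ := by
    have hfst {p} (hp : p ∈ P) : p.1 ∈ Q := Finset.mem_union_left _ (Finset.mem_image_of_mem _ hp)
    have hsnd {p} (hp : p ∈ P) : p.2 ∈ Q := Finset.mem_union_right _ (Finset.mem_image_of_mem _ hp)
    obtain ⟨g, p, hp, h | h⟩ := hP i j hij
    exacts [⟨g, _, hfst hp, _, hsnd hp, h⟩, ⟨g, _, hsnd hp, _, hfst hp, h⟩]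
  obtain ⟨g, p₁, hp₁, p₂, hp₂, rfl, rfl⟩ := hpair
  have hrep_of_smul {p : α} (hp : g • p ∈ orbit G a) : t p • a = p :=
    ht p (orbit_eq_iff.1 ((orbit_smul g p).symm.trans (orbit_eq_iff.2 hp)))
  have hclose := dClose_setOf_smul_eq (S := S) a g (t p₁) (t p₂)
    (hE _ (Finset.mem_image.2 ⟨(p₁, p₂), Finset.mem_product.2 ⟨hp₁, hp₂⟩, rfl⟩))
  rwa [hrep_of_smul hi, hrep_of_smul hj] at hclose

lemma exists_ncard_le_of_pairwise_of_finite_orbit_pairs (hS : Subgroup.closure S = ⊤)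
    {r : α → α → Prop} {P : Finset (α × α)}
    (hP : ∀ i j, r i j → ∃ g : G, ∃ p ∈ P,
      (i = g • p.1 ∧ j = g • p.2) ∨ (i = g • p.2 ∧ j = g • p.1))
    {a : α} (hbp : BoundedPacking S (stabilizer G a)) :
    ∃ k : ℕ, ∀ T ⊆ orbit G a, T.Pairwise r → T.Finite ∧ T.ncard ≤ k := by
  obtain ⟨D, hD, hclose⟩ := exists_dClose_setOf_smul_eq_of_finite_orbit_pairs hS hP a
  obtain ⟨k, hk⟩ := hbp.exists_ncard_le_of_pairwise_dClose hD
  exact ⟨k, fun T hT hr =>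
    hk T hT (hr.imp_on fun i hi j hj _ hij => hclose i (hT hi) j (hT hj) hij)⟩

end OrbitPacking

theorem bounded_packing_implies_finite_dimension_general
    {G X ι : Type*} [Group G] [MulAction G ι]
    (S : Finset G) (hS : Subgroup.closure (S : Set G) = ⊤)
    (W : Wallspace X ι)
    (horb : ∃ F : Finset ι, ∀ i : ι, ∃ g : G, ∃ j ∈ F, i = g • j)
    (htrans : ∃ P : Finset (ι × ι), ∀ i j : ι, W.Transverse i j →
      ∃ g : G, ∃ p ∈ P, (i = g • p.1 ∧ j = g • p.2) ∨ (i = g • p.2 ∧ j = g • p.1))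
    (hbp : ∀ i : ι, BoundedPacking (S : Set G) (MulAction.stabilizer G i)) :
    ∃ k : ℕ, ∀ T : Set ι, T.Pairwise W.Transverse → T.Finite ∧ T.ncard ≤ k := by
  obtain ⟨F, hF⟩ := horb
  obtain ⟨P, hP⟩ := htrans
  choose k hk using fun f : ι => exists_ncard_le_of_pairwise_of_finite_orbit_pairs hS hP (hbp f)
  refine ⟨∑ f ∈ F, k f, fun T hT => ?_⟩
  have hpiece (f : ι) : (T ∩ orbit G f).Finite ∧ (T ∩ orbit G f).ncard ≤ k f :=
    hk f _ Set.inter_subset_right (hT.mono Set.inter_subset_left)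
  have hcover : T ⊆ ⋃ f ∈ F, T ∩ orbit G f := fun i hi => by
    obtain ⟨g, f, hf, rfl⟩ := hF i
    exact Set.mem_biUnion hf ⟨hi, g, rfl⟩
  have hfin : (⋃ f ∈ F, T ∩ orbit G f).Finite :=
    F.finite_toSet.biUnion fun f _ => (hpiece f).1
  refine ⟨hfin.subset hcover, ?_⟩
  calc T.ncard ≤ (⋃ f ∈ F, T ∩ orbit G f).ncard := Set.ncard_le_ncard hcover hfin
    _ ≤ ∑ f ∈ F, (T ∩ orbit G f).ncard := F.set_ncard_biUnion_le _
    _ ≤ ∑ f ∈ F, k f := Finset.sum_le_sum fun f _ => (hpiece f).2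

/-- **Bounded packing implies finite dimension.**  Let `G` with finite generating set `S`
act on a wallspace `(X, W)` with finitely many orbits of wall indices and finitely many
orbits of unordered pairs of transverse walls, and suppose each wall stabilizer has bounded
packing in `G`.  Then there is a uniform bound `k` on the cardinality of any collection of
pairwise transverse walls (the `k`-Plane Intersection Property). -/
theorem bounded_packing_implies_finite_dimension
    {G X ι : Type*} [Group G] [MulAction G X] [MulAction G ι]
    (S : Finset G) (hS : Subgroup.closure (S : Set G) = ⊤)
    (W : Wallspace X ι) (hact : WallspaceAction G W)
    (horb : ∃ F : Finset ι, ∀ i : ι, ∃ g : G, ∃ j ∈ F, i = g • j)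
    (htrans : ∃ P : Finset (ι × ι), ∀ i j : ι, W.Transverse i j →
      ∃ g : G, ∃ p ∈ P, (i = g • p.1 ∧ j = g • p.2) ∨ (i = g • p.2 ∧ j = g • p.1))
    (hbp : ∀ i : ι, BoundedPacking (S : Set G) (MulAction.stabilizer G i)) :
    ∃ k : ℕ, ∀ T : Set ι, T.Pairwise W.Transverse → T.Finite ∧ T.ncard ≤ k :=
  bounded_packing_implies_finite_dimension_general S hS W horb htrans hbp
end

section
/- Let G be a group with finite generating set S, and let H₁, …, H_r be finitely generated subgroups such that each H_i has bounded packing in G. Choose an H_i-wall {U_i, V_i} for each i, and consider the wallspace on G whose walls are the G-translates {gU_i, gV_i} (g ∈ G, 1 ≤ i ≤ r). Then there exists k such that every collection of pairwise transverse walls of this wallspace has cardinality at most k; that is, the dual CAT(0) cube complex is finite dimensional. -/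
open Pointwise

/-!
The carrier of a wall `(A, B)` of `G`, namely `A ∩ B` together with the frontiers of `A` and `B`,
separates `G`: a word read from a point of `A` to a point of `B` passes through it. The carrier of
a translate `g • (U, V)` of an `H`-wall lies in a bounded neighbourhood of the coset `g H`.
Given two transverse such walls, either the carrier of one meets both halfspaces of the other, and
walking along its coset (coarsely connected because the subgroup is finitely generated) produces
a point of the other carrier close to both cosets; or each carrier misses a halfspace of the
other, and then the complement of the two remaining halfspaces is closed under the generators,
hence empty or everything, which contradicts transversality. So transverse walls have uniformly
close cosets, bounded packing bounds the number of cosets, and each coset carries at most two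
walls.
-/

section

variable {G : Type*} [Group G]

def WordLenLE (S : Set G) (g : G) (n : ℕ) : Prop :=
  ∃ l : List G, (∀ a ∈ l, a ∈ S ∨ a⁻¹ ∈ S) ∧ l.prod = g ∧ l.length ≤ n

namespace WordLenLE

variable {S : Set G} {g g' : G} {m n : ℕ}

theorem one : WordLenLE S (1 : G) 0 := ⟨[], by simp, rfl, le_rfl⟩

theorem of_mem (h : g ∈ S ∨ g⁻¹ ∈ S) : WordLenLE S g 1 := ⟨[g], by simpa using h, by simp, le_rfl⟩

theorem mono (h : WordLenLE S g m) (hmn : m ≤ n) : WordLenLE S g n :=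
  let ⟨l, hl, hp, hlen⟩ := h
  ⟨l, hl, hp, hlen.trans hmn⟩

theorem mul (h : WordLenLE S g m) (h' : WordLenLE S g' n) : WordLenLE S (g * g') (m + n) := by
  obtain ⟨l, hl, rfl, hlen⟩ := h
  obtain ⟨l', hl', rfl, hlen'⟩ := h'
  exact ⟨l ++ l', fun a ha => (List.mem_append.1 ha).elim (hl a) (hl' a), List.prod_append,
    by rw [List.length_append]; omega⟩

theorem inv (h : WordLenLE S g n) : WordLenLE S g⁻¹ n := by
  obtain ⟨l, hl, rfl, hlen⟩ := h
  refine ⟨(l.map fun a => a⁻¹).reverse, ?_, (List.prod_inv_reverse l).symm, by simpa using hlen⟩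
  simp only [List.mem_reverse, List.mem_map]
  rintro _ ⟨a, ha, rfl⟩
  simpa [or_comm] using hl a ha

theorem triangle_right {x y z : G} (h : WordLenLE S (x⁻¹ * z) m) (h' : WordLenLE S (y⁻¹ * z) n) :
    WordLenLE S (x⁻¹ * y) (m + n) := by
  simpa [mul_assoc] using h.mul h'.inv

end WordLenLE

theorem exists_wordLenLE_of_mem_closure {S : Set G} {g : G} (hg : g ∈ Subgroup.closure S) :
    ∃ n, WordLenLE S g n := by
  induction hg using Subgroup.closure_induction'' with
  | mem a ha => exact ⟨1, .of_mem (Or.inl ha)⟩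
  | inv_mem a ha => exact ⟨1, .of_mem (Or.inr (by simpa using ha))⟩
  | one => exact ⟨0, .one⟩
  | mul a b _ _ iha ihb =>
    obtain ⟨m, hm⟩ := iha
    obtain ⟨n, hn⟩ := ihb
    exact ⟨m + n, hm.mul hn⟩

theorem exists_wordLenLE_of_finset {S : Set G} (hS : Subgroup.closure S = ⊤) (Φ : Finset G) :
    ∃ C, ∀ f ∈ Φ, WordLenLE S f C := by
  choose n hn using fun f => exists_wordLenLE_of_mem_closure (hS ▸ Subgroup.mem_top f)
  exact ⟨Φ.sup n, fun f hf => (hn f).mono (Finset.le_sup hf)⟩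

theorem mul_mem_of_mem_closure {Ω T : Set G}
    (hΩ : ∀ x ∈ Ω, ∀ a, (a ∈ T ∨ a⁻¹ ∈ T) → x * a ∈ Ω) {x g : G} (hx : x ∈ Ω)
    (hg : g ∈ Subgroup.closure T) : x * g ∈ Ω := by
  induction hg using Subgroup.closure_induction'' generalizing x with
  | mem a ha => exact hΩ x hx a (Or.inl ha)
  | inv_mem a ha => exact hΩ x hx a⁻¹ (Or.inr (by simpa using ha))
  | one => simp [hx]
  | mul a b _ _ iha ihb => simpa [mul_assoc] using ihb (iha hx)

theorem exists_mul_mem_mul_notMem {A T : Set G} {x h : G} (hx : x ∈ A) (hxh : x * h ∉ A)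
    (hh : h ∈ Subgroup.closure T) :
    ∃ h' ∈ Subgroup.closure T, x * h' ∈ A ∧ ∃ a, (a ∈ T ∨ a⁻¹ ∈ T) ∧ x * h' * a ∉ A := by
  by_contra! hcon
  refine hxh (mul_mem_of_mem_closure (Ω := {y | x⁻¹ * y ∈ Subgroup.closure T ∧ y ∈ A})
    ?_ ⟨by simp, hx⟩ hh).2
  rintro y ⟨hy, hyA⟩ a ha
  have ha' : a ∈ Subgroup.closure T := ha.elim (fun h => Subgroup.subset_closure h)
    fun h => by simpa using Subgroup.inv_mem _ (Subgroup.subset_closure h)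
  refine ⟨by simpa [mul_assoc] using Subgroup.mul_mem _ hy ha', ?_⟩
  simpa using hcon (x⁻¹ * y) hy (by simpa using hyA) a ha

def wallCarrier (S : Finset G) (A B : Set G) : Set G :=
  (A ∩ B) ∪ frontierIn S A ∪ frontierIn S B

theorem wallCarrier_comm (S : Finset G) (A B : Set G) : wallCarrier S A B = wallCarrier S B A := by
  ext x
  simp only [wallCarrier, Set.mem_union, Set.mem_inter_iff]
  tauto

theorem frontierIn_smul (S : Finset G) (g : G) (A : Set G) :
    frontierIn S (g • A) = g • frontierIn S A := by
  ext x
  simp only [frontierIn, Set.mem_smul_set_iff_inv_smul_mem, smul_eq_mul, Set.mem_ofPred_eq,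
    mul_assoc]

theorem wallCarrier_smul (S : Finset G) (g : G) (A B : Set G) :
    wallCarrier S (g • A) (g • B) = g • wallCarrier S A B := by
  simp only [wallCarrier, frontierIn_smul, Set.smul_set_union, Set.smul_set_inter]

theorem exists_mem_wallCarrier_near {S : Finset G} {A B : Set G} {x g : G} {n : ℕ} (hx : x ∈ A)
    (hxg : x * g ∈ B) (hg : WordLenLE S g n) :
    ∃ z ∈ wallCarrier S A B, WordLenLE S (x⁻¹ * z) n := by
  obtain ⟨l, hl, rfl, hlen⟩ := hg
  suffices ∃ z ∈ wallCarrier S A B, WordLenLE S (x⁻¹ * z) l.length from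
    this.imp fun z hz => ⟨hz.1, hz.2.mono hlen⟩
  clear hlen
  induction l generalizing x with
  | nil => exact ⟨x, .inl (.inl ⟨hx, by simpa using hxg⟩), by simpa using WordLenLE.one⟩
  | cons a t ih =>
    have ha : a ∈ (S : Set G) ∨ a⁻¹ ∈ (S : Set G) := hl a List.mem_cons_self
    by_cases hxa : x * a ∈ A
    · obtain ⟨z, hz, hzlen⟩ := ih hxa (fun b hb => hl b (List.mem_cons_of_mem a hb))
        (by simpa [mul_assoc] using hxg)
      refine ⟨z, hz, ?_⟩
      simpa [mul_assoc, add_comm] using (WordLenLE.of_mem ha).mul hzlen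
    · exact ⟨x, .inl (.inr ⟨hx, a, ha, hxa⟩), by simpa using WordLenLE.one.mono (Nat.zero_le _)⟩

variable {S : Finset G} {A B A' B' : Set G}

theorem mul_notMem_of_disjoint_wallCarrier (hcov : A ∪ B = Set.univ)
    (hcov' : A' ∪ B' = Set.univ) (hK : Disjoint (wallCarrier S A B) B')
    (hK' : Disjoint (wallCarrier S A' B') B) {x a : G} (hxA : x ∉ A) (hxA' : x ∉ A')
    (ha : a ∈ S ∨ a⁻¹ ∈ S) : x * a ∉ A := by
  intro hxa
  have hxB : x ∈ B := (hcov.symm ▸ Set.mem_univ x : x ∈ A ∪ B).resolve_left hxA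
  have hxB' : x ∈ B' := (hcov'.symm ▸ Set.mem_univ x : x ∈ A' ∪ B').resolve_left hxA'
  by_cases hxaB : x * a ∈ B
  · have hxaB' : x * a ∉ B' := hK.notMem_of_mem_left (.inl (.inl ⟨hxa, hxaB⟩))
    exact hK'.notMem_of_mem_left (.inr ⟨hxB', a, ha, hxaB'⟩) hxB
  · exact hK.notMem_of_mem_left (.inr ⟨hxB, a, ha, hxaB⟩) hxB'

/-- If each carrier misses a halfspace of the other wall, the intersection of the complements of
the other two halfspaces is invariant under the generators, so it is empty or all of `G`. -/
theorem false_of_disjoint_wallCarrier (hS : Subgroup.closure (S : Set G) = ⊤)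
    (hcov : A ∪ B = Set.univ) (hcov' : A' ∪ B' = Set.univ)
    (hK : Disjoint (wallCarrier S A B) B') (hK' : Disjoint (wallCarrier S A' B') B)
    (hBB : (B ∩ B').Nonempty) (hAA : (A ∩ A').Nonempty) : False := by
  obtain ⟨s, hsB, hsB'⟩ := hBB
  obtain ⟨p, hpA, hpA'⟩ := hAA
  have hs : s ∈ Aᶜ ∩ A'ᶜ :=
    ⟨fun hsA => hK.notMem_of_mem_left (.inl (.inl ⟨hsA, hsB⟩)) hsB',
      fun hsA' => hK'.notMem_of_mem_left (.inl (.inl ⟨hsA', hsB'⟩)) hsB⟩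
  have hp := mul_mem_of_mem_closure (Ω := Aᶜ ∩ A'ᶜ) (T := S)
    (fun x hx a ha => ⟨mul_notMem_of_disjoint_wallCarrier hcov hcov' hK hK' hx.1 hx.2 ha,
      mul_notMem_of_disjoint_wallCarrier hcov' hcov hK' hK hx.2 hx.1 ha⟩)
    hs (hS ▸ Subgroup.mem_top (s⁻¹ * p))
  rw [mul_inv_cancel_left] at hp
  exact hp.1 hpA

structure IsCosetWall (S : Finset G) (C : ℕ) (H : Subgroup G) (x : G) (A B : Set G) : Prop where
  union_eq : A ∪ B = Set.univ
  carrier_near : ∀ z ∈ wallCarrier S A B, ∃ h ∈ H, WordLenLE S ((x * h)⁻¹ * z) C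
  le_closure : H ≤ Subgroup.closure {h | h ∈ H ∧ WordLenLE S h C}

variable {C : ℕ} {H H' : Subgroup G} {x x' : G}

theorem IsCosetWall.swap (hW : IsCosetWall S C H x A B) : IsCosetWall S C H x B A :=
  ⟨Set.union_comm A B ▸ hW.union_eq, wallCarrier_comm S A B ▸ hW.carrier_near, hW.le_closure⟩

theorem IsCosetWall.exists_near_wallCarrier (hW' : IsCosetWall S C H' x' A' B')
    (hcov : A ∪ B = Set.univ) {u v : G} (hu : u ∈ wallCarrier S A' B') (huA : u ∈ A)
    (hv : v ∈ wallCarrier S A' B') (hvB : v ∈ B) :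
    ∃ y ∈ x' • (H' : Set G), ∃ z ∈ wallCarrier S A B, WordLenLE S (y⁻¹ * z) C := by
  obtain ⟨h₁, hh₁, hu₁⟩ := hW'.carrier_near u hu
  obtain ⟨h₂, hh₂, hv₂⟩ := hW'.carrier_near v hv
  by_cases h₁A : x' * h₁ ∈ A
  · by_cases h₂A : x' * h₂ ∈ A
    · exact ⟨x' * h₂, ⟨h₂, hh₂, rfl⟩,
        exists_mem_wallCarrier_near h₂A (by rwa [mul_inv_cancel_left]) hv₂⟩
    · -- walk along the coset `x' H'` from `x' h₁ ∈ A` to `x' h₂ ∉ A`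
      have hclosure : Subgroup.closure {h | h ∈ H' ∧ WordLenLE S h C} ≤ H' :=
        (Subgroup.closure_le H').2 fun h hh => hh.1
      obtain ⟨h, hh, hyA, a, ha, hyaA⟩ := exists_mul_mem_mul_notMem h₁A
        (by rwa [mul_assoc, mul_inv_cancel_left]) (hW'.le_closure (mul_mem (inv_mem hh₁) hh₂))
      have haC : WordLenLE S a C := ha.elim (·.2) fun h => by simpa using h.2.inv
      have hyaB : x' * h₁ * h * a ∈ B :=
        (hcov.symm ▸ Set.mem_univ _ : _ ∈ A ∪ B).resolve_left hyaA
      exact ⟨x' * h₁ * h, ⟨h₁ * h, mul_mem hh₁ (hclosure hh), by simp [mul_assoc]⟩,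
        exists_mem_wallCarrier_near hyA hyaB haC⟩
  · have h₁B : x' * h₁ ∈ B := (hcov.symm ▸ Set.mem_univ _ : _ ∈ A ∪ B).resolve_left h₁A
    obtain ⟨z, hz, hzC⟩ :=
      exists_mem_wallCarrier_near h₁B (by rwa [mul_inv_cancel_left] : _ * _ ∈ A) hu₁
    exact ⟨x' * h₁, ⟨h₁, hh₁, rfl⟩, z, wallCarrier_comm S A B ▸ hz, hzC⟩

def IsNear (S : Set G) (n : ℕ) (X Y : Set G) : Prop :=
  ∃ a ∈ X, ∃ b ∈ Y, WordLenLE S (a⁻¹ * b) n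

theorem IsNear.symm {S : Set G} {n : ℕ} {X Y : Set G} (h : IsNear S n X Y) : IsNear S n Y X :=
  let ⟨a, ha, b, hb, hab⟩ := h
  ⟨b, hb, a, ha, by simpa using hab.inv⟩

theorem IsNear.dClose {S : Set G} {n : ℕ} {X Y : Set G} (h : IsNear S n X Y) {D : ℝ}
    (hD : (n : ℝ) < D) : DClose S D X Y :=
  let ⟨a, ha, b, hb, l, hl, hp, hlen⟩ := h
  ⟨a, ha, b, hb, l, hl, hp, lt_of_le_of_lt (by exact_mod_cast hlen) hD⟩

theorem IsCosetWall.isNear_of_crosses (hW : IsCosetWall S C H x A B)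
    (hW' : IsCosetWall S C H' x' A' B') {u v : G} (hu : u ∈ wallCarrier S A' B') (huA : u ∈ A)
    (hv : v ∈ wallCarrier S A' B') (hvB : v ∈ B) :
    IsNear S (2 * C) (x • (H : Set G)) (x' • (H' : Set G)) := by
  obtain ⟨y, hy, z, hz, hyz⟩ := hW'.exists_near_wallCarrier hW.union_eq hu huA hv hvB
  obtain ⟨h, hh, hxz⟩ := hW.carrier_near z hz
  exact ⟨x * h, ⟨h, hh, rfl⟩, y, hy, two_mul C ▸ hxz.triangle_right hyz⟩

theorem IsCosetWall.isNear_of_transverse (hS : Subgroup.closure (S : Set G) = ⊤)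
    (hW : IsCosetWall S C H x A B) (hW' : IsCosetWall S C H' x' A' B')
    (hAA : (A ∩ A').Nonempty) (hAB : (A ∩ B').Nonempty) (hBA : (B ∩ A').Nonempty)
    (hBB : (B ∩ B').Nonempty) :
    IsNear S (2 * C) (x • (H : Set G)) (x' • (H' : Set G)) := by
  by_cases h' : (wallCarrier S A' B' ∩ A).Nonempty ∧ (wallCarrier S A' B' ∩ B).Nonempty
  · obtain ⟨⟨u, hu, huA⟩, ⟨v, hv, hvB⟩⟩ := h'
    exact hW.isNear_of_crosses hW' hu huA hv hvB
  by_cases h : (wallCarrier S A B ∩ A').Nonempty ∧ (wallCarrier S A B ∩ B').Nonempty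
  · obtain ⟨⟨u, hu, huA⟩, ⟨v, hv, hvB⟩⟩ := h
    exact (hW'.isNear_of_crosses hW hu huA hv hvB).symm
  simp only [not_and_or, Set.not_nonempty_iff_eq_empty, ← Set.disjoint_iff_inter_eq_empty] at h h'
  have hc := wallCarrier_comm S A B
  have hc' := wallCarrier_comm S A' B'
  exfalso
  rcases h with h | h <;> rcases h' with h' | h'
  · exact false_of_disjoint_wallCarrier hS hW.swap.union_eq hW'.swap.union_eq (hc ▸ h) (hc' ▸ h')
      hAA hBB
  · exact false_of_disjoint_wallCarrier hS hW.union_eq hW'.swap.union_eq h (hc' ▸ h') hBA hAB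
  · exact false_of_disjoint_wallCarrier hS hW.swap.union_eq hW'.union_eq (hc ▸ h) h' hAB hBA
  · exact false_of_disjoint_wallCarrier hS hW.union_eq hW'.union_eq h h' hBB hAA

namespace IsHWall

variable {U V : Set G}

theorem exists_wallCarrier_subset (hw : IsHWall S H U V) :
    ∃ F : Finset G, wallCarrier S U V ⊆ (H : Set G) * F := by
  classical
  obtain ⟨F₁, h₁⟩ := hw.inter_hfinite
  obtain ⟨F₂, h₂⟩ := hw.frontierU
  obtain ⟨F₃, h₃⟩ := hw.frontierV
  have hstab : {h : G | h ∈ H ∧ h • U = U ∧ h • V = V} ⊆ H := fun h hh => hh.1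
  refine ⟨F₁ ∪ F₂ ∪ F₃, ?_⟩
  rintro z ((hz | hz) | hz)
  · exact Set.mul_subset_mul_left (by simp) (h₁ hz)
  · exact Set.mul_subset_mul hstab (fun a ha => by simp [ha]) (h₂ hz)
  · exact Set.mul_subset_mul hstab (fun a ha => by simp [ha]) (h₃ hz)

theorem isCosetWall_smul (hw : IsHWall S H U V) {F T : Finset G}
    (hF : wallCarrier S U V ⊆ (H : Set G) * F) (hFC : ∀ f ∈ F, WordLenLE S f C)
    (hT : Subgroup.closure (T : Set G) = H) (hTC : ∀ t ∈ T, WordLenLE S t C) (g : G) :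
    IsCosetWall S C H g (g • U) (g • V) where
  union_eq := by rw [← Set.smul_set_union, hw.cover, Set.smul_set_univ]
  carrier_near := by
    rw [wallCarrier_smul]
    rintro _ ⟨_, hz, rfl⟩
    obtain ⟨h, hh, f, hf, rfl⟩ := hF hz
    exact ⟨h, hh, by simpa [mul_assoc] using hFC f hf⟩
  le_closure := hT ▸ Subgroup.closure_mono fun t ht =>
    ⟨hT ▸ Subgroup.subset_closure ht, hTC t ht⟩

theorem translate_eq_or_eq_swap_of_coset_eq (hw : IsHWall S H U V) {g g' : G}
    (hgg' : g' • (H : Set G) = g • (H : Set G)) :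
    (g' • U, g' • V) = (g • U, g • V) ∨ (g' • U, g' • V) = (g • V, g • U) := by
  obtain ⟨h, hh, rfl⟩ : g' ∈ g • (H : Set G) := hgg' ▸ ⟨1, H.one_mem, mul_one g'⟩
  rcases hw.invar h hh with ⟨hU, hV⟩ | ⟨hU, hV⟩
  · left; simp [← smul_smul, hU, hV]
  · right; simp [← smul_smul, hU, hV]

end IsHWall

theorem exists_card_le_of_pairwise_transverse (hS : Subgroup.closure (S : Set G) = ⊤)
    (hbp : BoundedPacking (S : Set G) H) {U V : Set G} (hw : IsHWall S H U V)
    (hcw : ∀ g, IsCosetWall S C H g (g • U) (g • V)) :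
    ∃ k : ℕ, ∀ T : Finset (Set G × Set G),
      (∀ p ∈ T, ∃ g : G, p = (g • U, g • V) ∨ p = (g • V, g • U)) →
      (∀ p ∈ T, ∀ q ∈ T, p ≠ q →
        (p.1 ∩ q.1).Nonempty ∧ (p.1 ∩ q.2).Nonempty ∧
        (p.2 ∩ q.1).Nonempty ∧ (p.2 ∩ q.2).Nonempty) →
      T.card ≤ 2 * k := by
  classical
  obtain ⟨k, hk⟩ := hbp (2 * C + 1) (by positivity)
  refine ⟨k, fun T hrep htrans => ?_⟩
  choose! g hg using hrep
  have hcw' : ∀ p ∈ T, IsCosetWall S C H (g p) p.1 p.2 := fun p hp => by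
    rcases hg p hp with h | h <;> rw [congrArg Prod.fst h, congrArg Prod.snd h]
    exacts [hcw _, (hcw _).swap]
  let coset : Set G × Set G → Set G := fun p => g p • (H : Set G)
  -- a coset `g H` carries only the two orientations of `g • (U, V)`
  have hfibre : ∀ A ∈ T.image coset, (T.filter (coset · = A)).card ≤ 2 := by
    simp only [Finset.mem_image]
    rintro _ ⟨p, -, rfl⟩
    refine (Finset.card_le_card (t := {(g p • U, g p • V), (g p • V, g p • U)}) ?_).trans
      Finset.card_le_two
    intro q hq
    obtain ⟨hqT, hqp⟩ := Finset.mem_filter.1 hq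
    rcases hw.translate_eq_or_eq_swap_of_coset_eq hqp with h | h <;>
      simp only [Prod.mk.injEq] at h <;>
      rcases hg q hqT with hq | hq <;> rw [hq] <;> simp [h.1, h.2]
  have hcosets : (T.image coset).card ≤ k := by
    rw [← Set.ncard_coe_finset]
    refine (hk _ ?_ ?_).2
    · simp only [Finset.coe_image, Set.mem_image]
      rintro _ ⟨p, -, rfl⟩
      exact ⟨g p, rfl⟩
    · simp only [Finset.coe_image]
      rintro _ ⟨p, hp, rfl⟩ _ ⟨q, hq, rfl⟩ hpq
      obtain ⟨hAA, hAB, hBA, hBB⟩ := htrans p hp q hq (fun h => hpq (h ▸ rfl))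
      exact ((hcw' p hp).isNear_of_transverse hS (hcw' q hq) hAA hAB hBA hBB).dClose
        (by push_cast; linarith)
  calc T.card ≤ 2 * (T.image coset).card := T.card_le_mul_card_image 2 hfibre
    _ ≤ 2 * k := Nat.mul_le_mul_left 2 hcosets

theorem exists_isCosetWall_bound {ι : Type*} [Finite ι] (hS : Subgroup.closure (S : Set G) = ⊤)
    {H : ι → Subgroup G} (hfg : ∀ i, (H i).FG) {U V : ι → Set G}
    (hwall : ∀ i, IsHWall S (H i) (U i) (V i)) :
    ∃ C, ∀ i g, IsCosetWall S C (H i) g (g • U i) (g • V i) := by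
  classical
  have := Fintype.ofFinite ι
  choose F hF using fun i => (hwall i).exists_wallCarrier_subset
  choose T hT using hfg
  obtain ⟨C, hC⟩ := exists_wordLenLE_of_finset hS (Finset.univ.biUnion fun i => F i ∪ T i)
  exact ⟨C, fun i => (hwall i).isCosetWall_smul (hF i)
    (fun f hf => hC f (Finset.mem_biUnion.2 ⟨i, Finset.mem_univ i, Finset.mem_union_left _ hf⟩))
    (hT i)
    (fun t ht => hC t (Finset.mem_biUnion.2 ⟨i, Finset.mem_univ i, Finset.mem_union_right _ ht⟩))⟩

end

/-- **Finite dimensionality of the cube complex dual to a system of `H_i`-walls.**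
Let `G` have finite generating set `S`, let `H 1, …, H r` be finitely generated subgroups
with bounded packing in `G`, and choose an `H i`-wall `{U i, V i}` for each `i`.  In the
wallspace on `G` whose walls are the translates `{g·U i, g·V i}`, there is a uniform bound
`k` on the cardinality of any collection of pairwise transverse walls; hence the dual
CAT(0) cube complex is finite dimensional. -/
theorem hwalls_bounded_packing_finite_dimension
    {G : Type*} [Group G]
    (S : Finset G) (hS : Subgroup.closure (S : Set G) = ⊤)
    (r : ℕ) (H : Fin r → Subgroup G)
    (hfg : ∀ i, (H i).FG)
    (hbp : ∀ i, BoundedPacking (S : Set G) (H i))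
    (U V : Fin r → Set G)
    (hwall : ∀ i, IsHWall S (H i) (U i) (V i)) :
    ∃ k : ℕ, ∀ T : Finset (Set G × Set G),
      (∀ p ∈ T, ∃ (g : G) (i : Fin r),
        p = (g • U i, g • V i) ∨ p = (g • V i, g • U i)) →
      (∀ p ∈ T, ∀ q ∈ T, p ≠ q →
        (p.1 ∩ q.1).Nonempty ∧ (p.1 ∩ q.2).Nonempty ∧
        (p.2 ∩ q.1).Nonempty ∧ (p.2 ∩ q.2).Nonempty) →
      T.card ≤ k := by
  classical
  obtain ⟨C, hC⟩ := exists_isCosetWall_bound hS hfg hwall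
  choose k hk using fun i =>
    exists_card_le_of_pairwise_transverse hS (hbp i) (hwall i) (hC i)
  refine ⟨∑ i, 2 * k i, fun T hrep htrans => ?_⟩
  let translates i := T.filter fun p => ∃ g : G, p = (g • U i, g • V i) ∨ p = (g • V i, g • U i)
  have hT : T = Finset.univ.biUnion translates := by
    ext p
    simp only [translates, Finset.mem_biUnion, Finset.mem_univ, Finset.mem_filter, true_and]
    exact ⟨fun hp => (hrep p hp).elim fun g ⟨i, h⟩ => ⟨i, hp, g, h⟩, fun ⟨_, hp, _⟩ => hp⟩
  calc T.card ≤ ∑ i, (translates i).card := hT ▸ Finset.card_biUnion_le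
    _ ≤ ∑ i, 2 * k i := Finset.sum_le_sum fun i _ =>
      hk i _ (fun p hp => (Finset.mem_filter.1 hp).2)
        (fun p hp q hq => htrans p (Finset.mem_filter.1 hp).1 q (Finset.mem_filter.1 hq).1)
end

section
/- (Key step in simple connectedness of the dual) Let (X, W) be a wallspace and let c₀, c₁, …, c_t = c₀ be a closed path of 0-cubes of the dual cube complex in which consecutive 0-cubes are adjacent; call the unique index at which c_{k−1} and c_k differ the wall dual to the k-th edge. Suppose the p-th and q-th edges are dual to the same index i₁ with p + 1 < q ≤ t, and the pair (p, q) is innermost: there is no pair (r, s) ≠ (p, q) with p ≤ r < s ≤ q such that the r-th and s-th edges are dual to a common index. Then i₁ and the index i₂ dual to the (p+1)-st edge are transverse walls. -/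
open Pointwise

/-
Along the path, the orientation of a wall changes exactly at the edges dual to it. Write
`i₁ = w p` and `i₂ = w (p + 1)`. Innermostness says that no edge strictly between the `p`-th
and the `q`-th is dual to `i₁`, and that no edge after the `(p+1)`-st up to the `q`-th is dual
to `i₂`. Hence, relative to `c p`, the cube `c (p - 1)` flips only `i₁`, the cube `c (p + 1)`
flips only `i₂`, and `c q` flips both. Since the left halfspaces of any `0`-cube meet, these
four cubes realise all four intersections of halfspaces of `i₁` and `i₂`.
-/

theorem path_orientation_eq_of_dual_ne {ι : Type*} {c : ℕ → ι → Bool} {w : ℕ → ι} {i : ι}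
    {m n : ℕ} (hmn : m ≤ n)
    (hedge : ∀ k, m < k → k ≤ n → ∀ j, j ≠ w k → c (k - 1) j = c k j)
    (hi : ∀ k, m < k → k ≤ n → w k ≠ i) : c m i = c n i := by
  induction n, hmn using Nat.le_induction with
  | base => rfl
  | succ n hmn ih =>
    calc c m i = c n i :=
          ih (fun k hmk hkn => hedge k hmk (by omega)) fun k hmk hkn => hi k hmk (by omega)
      _ = c (n + 1) i := hedge (n + 1) (by omega) le_rfl i (hi (n + 1) (by omega) le_rfl).symm

namespace Wallspace

variable {X ι : Type*} (W : Wallspace X ι)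

theorem transverse_of_forall_exists_isZeroCube {i j : ι} (hij : i ≠ j)
    (h : ∀ a b : Bool, ∃ c, W.IsZeroCube c ∧ c i = a ∧ c j = b) : W.Transverse i j := by
  have key : ∀ a b : Bool, (W.side i a ∩ W.side j b).Nonempty := fun a b => by
    obtain ⟨c, hc, rfl, rfl⟩ := h a b
    exact hc.1 i j
  exact ⟨hij, key true true, key true false, key false true, key false false⟩

theorem transverse_of_four_isZeroCube {i j : ι} (hij : i ≠ j) {c₀ c₁ c₂ c₃ : ι → Bool}
    (h₀ : W.IsZeroCube c₀) (h₁ : W.IsZeroCube c₁) (h₂ : W.IsZeroCube c₂)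
    (h₃ : W.IsZeroCube c₃) (h₁i : c₁ i ≠ c₀ i) (h₁j : c₁ j = c₀ j) (h₂i : c₂ i = c₀ i)
    (h₂j : c₂ j ≠ c₀ j) (h₃i : c₃ i ≠ c₀ i) (h₃j : c₃ j ≠ c₀ j) : W.Transverse i j := by
  refine W.transverse_of_forall_exists_isZeroCube hij fun a b => ?_
  have flip : ∀ x y z : Bool, x ≠ z → y ≠ z → x = y := by decide
  rcases eq_or_ne a (c₀ i) with rfl | ha <;> rcases eq_or_ne b (c₀ j) with rfl | hb
  · exact ⟨c₀, h₀, rfl, rfl⟩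
  · exact ⟨c₂, h₂, h₂i, flip _ _ _ h₂j hb⟩
  · exact ⟨c₁, h₁, flip _ _ _ h₁i ha, h₁j⟩
  · exact ⟨c₃, h₃, flip _ _ _ h₃i ha, flip _ _ _ h₃j hb⟩

end Wallspace

theorem innermost_pair_gives_transverse_walls_general
    {X ι : Type*} (W : Wallspace X ι)
    (t : ℕ) (c : ℕ → ι → Bool) (w : ℕ → ι)
    (hcube : ∀ k ≤ t, W.IsZeroCube (c k))
    (hedge : ∀ k, 1 ≤ k → k ≤ t →
      (c (k - 1) (w k) ≠ c k (w k) ∧ ∀ j : ι, j ≠ w k → c (k - 1) j = c k j))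
    (p q : ℕ) (hp : 1 ≤ p) (hpq : p + 1 < q) (hqt : q ≤ t)
    (hdual : w p = w q)
    (hinner : ∀ r s : ℕ, p ≤ r → r < s → s ≤ q → (r, s) ≠ (p, q) → w r ≠ w s) :
    W.Transverse (w p) (w (p + 1)) := by
  have hedge_p := hedge p hp (by omega)
  have hedge_succ := hedge (p + 1) (by omega) (by omega)
  have hedge_q := hedge q (by omega) hqt
  have hne : w p ≠ w (p + 1) := hinner p (p + 1) le_rfl (by omega) (by omega) (by simp; omega)
  have hconst₁ : c p (w p) = c (q - 1) (w p) :=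
    path_orientation_eq_of_dual_ne (by omega) (fun k _ hk => (hedge k (by omega) (by omega)).2)
      fun k hpk hk => (hinner p k le_rfl hpk (by omega) (by simp; omega)).symm
  have hconst₂ : c (p + 1) (w (p + 1)) = c q (w (p + 1)) :=
    path_orientation_eq_of_dual_ne (by omega) (fun k _ hk => (hedge k (by omega) (by omega)).2)
      fun k hpk hk => (hinner (p + 1) k (by omega) hpk hk (by simp)).symm
  refine W.transverse_of_four_isZeroCube hne (hcube p (by omega)) (hcube (p - 1) (by omega))
    (hcube (p + 1) (by omega)) (hcube q hqt) hedge_p.1 (hedge_p.2 _ hne.symm)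
    (hedge_succ.2 _ hne).symm hedge_succ.1.symm ?_ ?_
  · rw [hconst₁, hdual]
    exact hedge_q.1.symm
  · rw [← hconst₂]
    exact hedge_succ.1.symm

/-- **Key step in the simple connectedness of the dual cube complex.**  Let
`c 0, c 1, …, c t = c 0` be a closed path of `0`-cubes in which the `k`-th edge
(from `c (k-1)` to `c k`) is dual to the wall `w k`.  If the `p`-th and `q`-th edges are
dual to the same wall (`1 ≤ p`, `p + 1 < q ≤ t`) and the pair `(p, q)` is innermost, then
the wall `w p` dual to the `p`-th edge and the wall `w (p+1)` dual to the `(p+1)`-st edge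
are transverse. -/
theorem innermost_pair_gives_transverse_walls
    {X ι : Type*} (W : Wallspace X ι)
    (t : ℕ) (c : ℕ → ι → Bool) (w : ℕ → ι)
    (hcube : ∀ k ≤ t, W.IsZeroCube (c k))
    (hclosed : c t = c 0)
    (hedge : ∀ k, 1 ≤ k → k ≤ t →
      (c (k - 1) (w k) ≠ c k (w k) ∧ ∀ j : ι, j ≠ w k → c (k - 1) j = c k j))
    (p q : ℕ) (hp : 1 ≤ p) (hpq : p + 1 < q) (hqt : q ≤ t)
    (hdual : w p = w q)
    (hinner : ∀ r s : ℕ, p ≤ r → r < s → s ≤ q → (r, s) ≠ (p, q) → w r ≠ w s) :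
    W.Transverse (w p) (w (p + 1)) :=
  innermost_pair_gives_transverse_walls_general W t c w hcube hedge p q hp hpq hqt hdual hinner
end

section
/- (Nonpositive curvature of the dual, combinatorial form) Let (X, W) be a wallspace, let c be a 0-cube of the dual cube complex, and let i₁, …, i_n be distinct, pairwise transverse wall indices, each of which is reversible at c. Then for every subset T ⊆ {i₁, …, i_n}, the orientation obtained from c by swapping the ordered pair at exactly the indices in T is again a 0-cube. (Thus the n walls span the corner of an n-cube at c, which is the combinatorial content of the flag condition on links.) -/
open Pointwise

/-!
Only pairs of walls need checking, and a pair involves at most two flipped walls. A flipped wall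
paired with an unflipped one (or with itself) is handled by its reversibility at `c`; two flipped
walls are transverse, so every choice of their halfspaces meets. Finiteness survives because only
finitely many walls are flipped.
-/

namespace Wallspace

variable {X ι : Type*} {W : Wallspace X ι}

theorem Transverse.side_inter_nonempty {i j : ι} (h : W.Transverse i j) (a b : Bool) :
    (W.side i a ∩ W.side j b).Nonempty := by
  obtain ⟨-, hUU, hUV, hVU, hVV⟩ := h
  cases a <;> cases b <;> assumption

theorem IsZeroCube.side_nonempty {c : ι → Bool} (hc : W.IsZeroCube c) (i : ι) :
    (W.side i (c i)).Nonempty := by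
  simpa only [Set.inter_self] using hc.1 i i

theorem Reversible.isZeroCube_update [DecidableEq ι] {c : ι → Bool} {i : ι}
    (h : W.Reversible c i) : W.IsZeroCube (Function.update c i (!c i)) :=
  h _ (Function.update_self i _ c) fun _ hj => Function.update_of_ne hj _ _

theorem IsZeroCube.side_nonempty_of_reversible {c : ι → Bool} (hc : W.IsZeroCube c) {i : ι}
    (hi : W.Reversible c i) (b : Bool) : (W.side i b).Nonempty := by
  classical
  rcases b.eq_or_eq_not (c i) with rfl | rfl
  · exact hc.side_nonempty i
  · simpa only [Function.update_self] using hi.isZeroCube_update.side_nonempty i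

theorem IsZeroCube.side_inter_nonempty_of_reversible {c : ι → Bool} (hc : W.IsZeroCube c)
    {i j : ι} (hi : W.Reversible c i) (hji : j ≠ i) (b : Bool) :
    (W.side i b ∩ W.side j (c j)).Nonempty := by
  classical
  rcases b.eq_or_eq_not (c i) with rfl | rfl
  · exact hc.1 i j
  · simpa only [Function.update_self, Function.update_of_ne hji] using
      hi.isZeroCube_update.1 i j

theorem finite_setOf_notMem_side_of_eq_off {c τ : ι → Bool}
    (hc : ∀ x, {i | x ∉ W.side i (c i)}.Finite) {S : Set ι} (hS : S.Finite)
    (hτ : ∀ j ∉ S, τ j = c j) (x : X) : {i | x ∉ W.side i (τ i)}.Finite := by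
  refine ((hc x).union hS).subset fun i hi => ?_
  by_cases hiS : i ∈ S
  · exact Or.inr hiS
  · exact Or.inl (show x ∉ W.side i (c i) by rwa [← hτ i hiS])

theorem IsZeroCube.of_eq_off_transverse_reversible {c τ : ι → Bool} (hc : W.IsZeroCube c)
    {S : Set ι} (hS : S.Finite) (htr : S.Pairwise W.Transverse)
    (hrev : ∀ i ∈ S, W.Reversible c i) (hτ : ∀ j ∉ S, τ j = c j) : W.IsZeroCube τ := by
  refine ⟨fun i j => ?_, finite_setOf_notMem_side_of_eq_off hc.2 hS hτ⟩
  rcases eq_or_ne i j with rfl | hij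
  · rw [Set.inter_self]
    by_cases hi : i ∈ S
    · exact hc.side_nonempty_of_reversible (hrev i hi) _
    · rw [hτ i hi]
      exact hc.side_nonempty i
  by_cases hi : i ∈ S <;> by_cases hj : j ∈ S
  · exact (htr hi hj hij).side_inter_nonempty _ _
  · rw [hτ j hj]
    exact hc.side_inter_nonempty_of_reversible (hrev i hi) hij.symm _
  · rw [hτ i hi, Set.inter_comm]
    exact hc.side_inter_nonempty_of_reversible (hrev j hj) hij _
  · rw [hτ i hi, hτ j hj]
    exact hc.1 i j

end Wallspace

/-- **Nonpositive curvature of the dual cube complex, combinatorial form.**  Let `c` be a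
`0`-cube, and let `I` be a finite set of pairwise transverse wall indices each of which is
reversible at `c`.  Then for every subset `T ⊆ I`, the orientation obtained from `c` by
swapping the pair at exactly the indices in `T` is again a `0`-cube; thus the walls of `I`
span the corner of a cube at `c`. -/
theorem transverse_reversible_walls_span_cube
    {X ι : Type*} (W : Wallspace X ι)
    (c : ι → Bool) (hc : W.IsZeroCube c)
    (I : Finset ι) (htr : (I : Set ι).Pairwise W.Transverse)
    (hrev : ∀ i ∈ I, W.Reversible c i)
    (T : Finset ι) (hT : T ⊆ I) :
    ∀ τ : ι → Bool, (∀ j ∈ T, τ j = !(c j)) → (∀ j ∉ T, τ j = c j) →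
      W.IsZeroCube τ :=
  fun _ _ hτ => hc.of_eq_off_transverse_reversible T.finite_toSet
    (htr.mono (Finset.coe_subset.mpr hT)) (fun i hi => hrev i (hT hi))
    (fun j hj => hτ j (Finset.mem_coe.not.mp hj))
end

section
/- (Maximal transverse families span maximal cubes) Let (X, W) be a wallspace with X nonempty. Let I = {i₁, …, i_k} be a finite maximal collection of pairwise transverse wall indices (for every index j ∉ I, j is not transverse to some i ∈ I), each of whose walls is nonvacuous (both closed halfspaces U i and V i are nonempty). Then there exists an orientation σ of the indices outside I such that every full orientation extending σ by an arbitrary choice of orientation at each index of I is a 0-cube of the dual cube complex; moreover σ is unique, so I is the set of independent walls of a unique (maximal) cube of the dual cube complex. -/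
open Pointwise

/-!
For a wall `j ∉ I`, maximality gives `i ∈ I` not transverse to `j`, i.e. a closed halfspace of
`i` lying in an open halfspace of `j`; orient `j` towards that halfspace. That oriented
halfspace of `j` then meets every halfspace of every wall of `I`: for the other walls of `I`
this comes from transversality to `i`, and for the complementary halfspace of `i` it comes from
the absence of duplicate partitions, since otherwise `j` and `i` would be the same genuine
partition. Hence any two chosen halfspaces meet, whatever the orientation on `I`, and
finiteness holds because every chosen halfspace outside `I` contains one of the finitely many
points picked in the halfspaces of `I`. Conversely, a wall `j ∉ I` admitting two such
orientations would meet every halfspace of a wall of `I` it is not transverse to, which is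
absurd; so the orientation is unique.
-/

namespace Wallspace

variable {X ι : Type*} (W : Wallspace X ι)

theorem mem_side_or_mem_side_not (i : ι) (b : Bool) (x : X) :
    x ∈ W.side i b ∨ x ∈ W.side i (!b) := by
  have hx : x ∈ W.U i ∪ W.V i := W.cover i ▸ Set.mem_univ x
  cases b
  · exact hx.symm
  · exact hx

theorem subset_openSide_iff {A : Set X} {j : ι} {c : Bool} :
    A ⊆ W.openSide j c ↔ Disjoint A (W.side j (!c)) := by
  rw [openSide, Set.subset_sdiff]
  refine ⟨And.right, fun h => ⟨fun x hx => ?_, h⟩⟩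
  exact (W.mem_side_or_mem_side_not j c x).resolve_right (Set.disjoint_left.1 h hx)

theorem subset_side_not_of_disjoint {A : Set X} {j : ι} {c : Bool}
    (h : Disjoint A (W.side j c)) : A ⊆ W.side j (!c) :=
  (W.subset_openSide_iff.2 (by rwa [Bool.not_not])).trans Set.sdiff_subset

theorem side_nonempty {i : ι} (h : (W.U i).Nonempty ∧ (W.V i).Nonempty) (b : Bool) :
    (W.side i b).Nonempty := by
  cases b
  exacts [h.2, h.1]

theorem transverse_iff {i j : ι} :
    W.Transverse i j ↔ i ≠ j ∧ ∀ b c, (W.side i b ∩ W.side j c).Nonempty := by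
  constructor
  · rintro ⟨hij, h₁, h₂, h₃, h₄⟩
    exact ⟨hij, fun b c => by cases b <;> cases c <;> assumption⟩
  · rintro ⟨hij, h⟩
    exact ⟨hij, h true true, h true false, h false true, h false false⟩

theorem eq_of_side_eq_side {i j : ι} {b c : Bool} (hnv : (W.U i).Nonempty ∧ (W.V i).Nonempty)
    (hdisj : Disjoint (W.side i b) (W.side i (!b))) (h : W.side i b = W.side j c)
    (h' : W.side i (!b) = W.side j (!c)) : i = j := by
  by_contra hij
  refine W.no_dup_partition i j hij ?_ ?_ hnv
  · cases b <;> cases c <;> simp_all [side]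
  · cases b <;> simp_all [side, Set.disjoint_iff_inter_eq_empty, Set.inter_comm]

theorem side_not_inter_side_not_nonempty {i j : ι} {b c : Bool} (hij : i ≠ j)
    (hnv : (W.U i).Nonempty ∧ (W.V i).Nonempty) (h : Disjoint (W.side i b) (W.side j c)) :
    (W.side i (!b) ∩ W.side j (!c)).Nonempty := by
  rw [← Set.not_disjoint_iff_nonempty_inter]
  intro h'
  have h₁ := W.subset_side_not_of_disjoint h
  have h₂ := W.subset_side_not_of_disjoint h'
  have h₃ := W.subset_side_not_of_disjoint h.symm
  have h₄ := W.subset_side_not_of_disjoint h'.symm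
  rw [Bool.not_not] at h₂ h₄
  refine hij (W.eq_of_side_eq_side hnv (h'.symm.mono_left h₁) (h₁.antisymm h₄) ?_)
  rw [Bool.not_not]
  exact h₂.antisymm h₃

theorem transverse_of_forall_isZeroCube {i j : ι} (hij : i ≠ j)
    (h : ∀ b c, ∃ τ, W.IsZeroCube τ ∧ τ i = b ∧ τ j = c) : W.Transverse i j := by
  refine W.transverse_iff.2 ⟨hij, fun b c => ?_⟩
  obtain ⟨τ, hτ, rfl, rfl⟩ := h b c
  exact hτ.1 i j

theorem finite_setOf_mem_side_notMem_side (c : ι → Bool) (x y : X) :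
    {k | y ∈ W.side k (c k) ∧ x ∉ W.side k (c k)}.Finite := by
  refine ((W.betwixt_finite y).union (W.sep_finite x y)).subset ?_
  rintro k ⟨hy, hx⟩
  have hx' := (W.mem_side_or_mem_side_not k (c k) x).resolve_left hx
  generalize c k = b at hy hx hx'
  by_cases hy' : y ∈ W.side k (!b)
  · left
    cases b <;> simp_all [side]
  · right
    cases b <;> simp_all [side]

theorem finite_setOf_notMem_side {S : Set ι} {Y : Set X} (hS : S.Finite) (hY : Y.Finite)
    {c : ι → Bool} (h : ∀ k ∉ S, ∃ y ∈ Y, y ∈ W.side k (c k)) (x : X) :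
    {k | x ∉ W.side k (c k)}.Finite := by
  refine (hS.union (hY.biUnion fun y _ => W.finite_setOf_mem_side_notMem_side c x y)).subset ?_
  intro k hx
  by_cases hk : k ∈ S
  · exact Or.inl hk
  obtain ⟨y, hy, hyk⟩ := h k hk
  exact Or.inr (Set.mem_biUnion hy ⟨hyk, hx⟩)

def OrientedToward (I : Set ι) (σ : ι → Bool) : Prop :=
  ∀ j ∉ I, ∃ i ∈ I, ∃ b, W.side i b ⊆ W.openSide j (σ j)

def SpansCube (I : Set ι) (σ : ι → Bool) : Prop :=
  ∀ τ : ι → Bool, (∀ j ∉ I, τ j = σ j) → W.IsZeroCube τ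

theorem exists_orientedToward {I : Set ι} (hmax : ∀ j ∉ I, ∃ i ∈ I, ¬ W.Transverse j i) :
    ∃ σ, W.OrientedToward I σ := by
  have h : ∀ j, ∃ c : Bool, j ∉ I → ∃ i ∈ I, ∃ b, W.side i b ⊆ W.openSide j c := by
    intro j
    by_cases hj : j ∈ I
    · exact ⟨true, fun h => (h hj).elim⟩
    obtain ⟨i, hi, hnt⟩ := hmax j hj
    have hnt' : ¬ ∀ c b, (W.side j c ∩ W.side i b).Nonempty :=
      fun h => hnt (W.transverse_iff.2 ⟨(ne_of_mem_of_not_mem hi hj).symm, h⟩)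
    simp only [not_forall, Set.not_nonempty_iff_eq_empty] at hnt'
    obtain ⟨c, b, h⟩ := hnt'
    refine ⟨!c, fun _ => ⟨i, hi, b, W.subset_openSide_iff.2 ?_⟩⟩
    rw [Bool.not_not, Set.disjoint_iff_inter_eq_empty, Set.inter_comm, h]
  choose σ hσ using h
  exact ⟨σ, hσ⟩

variable {W} {I : Set ι} {σ : ι → Bool}

theorem OrientedToward.side_inter_side_nonempty (hσ : W.OrientedToward I σ)
    (htr : I.Pairwise W.Transverse) (hnv : ∀ i ∈ I, (W.U i).Nonempty ∧ (W.V i).Nonempty)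
    {j : ι} (hj : j ∉ I) {i : ι} (hi : i ∈ I) (b : Bool) :
    (W.side j (σ j) ∩ W.side i b).Nonempty := by
  obtain ⟨i₀, hi₀, b₀, hsub⟩ := hσ j hj
  rcases eq_or_ne i i₀ with rfl | hii₀
  · rcases Bool.eq_or_eq_not b b₀ with rfl | rfl
    · obtain ⟨z, hz⟩ := W.side_nonempty (hnv i hi) b
      exact ⟨z, Set.sdiff_subset (hsub hz), hz⟩
    · rw [Set.inter_comm, ← Bool.not_not (σ j)]
      exact W.side_not_inter_side_not_nonempty (ne_of_mem_of_not_mem hi hj) (hnv i hi)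
        (W.subset_openSide_iff.1 hsub)
  · obtain ⟨z, hz₀, hz⟩ := (W.transverse_iff.1 (htr hi₀ hi hii₀.symm)).2 b₀ b
    exact ⟨z, Set.sdiff_subset (hsub hz₀), hz⟩

theorem OrientedToward.exists_side_subset_side (hσ : W.OrientedToward I σ) {τ : ι → Bool}
    (hτ : ∀ j ∉ I, τ j = σ j) (k : ι) : ∃ i ∈ I, ∃ b, W.side i b ⊆ W.side k (τ k) := by
  by_cases hk : k ∈ I
  · exact ⟨k, hk, τ k, subset_rfl⟩
  obtain ⟨i, hi, b, h⟩ := hσ k hk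
  exact ⟨i, hi, b, hτ k hk ▸ h.trans Set.sdiff_subset⟩

theorem OrientedToward.side_inter_side_nonempty_of_eq_outside (hσ : W.OrientedToward I σ)
    (htr : I.Pairwise W.Transverse) (hnv : ∀ i ∈ I, (W.U i).Nonempty ∧ (W.V i).Nonempty)
    {τ : ι → Bool} (hτ : ∀ j ∉ I, τ j = σ j) (k l : ι) :
    (W.side k (τ k) ∩ W.side l (τ l)).Nonempty := by
  wlog hk : k ∉ I generalizing k l
  · rw [not_not] at hk
    by_cases hl : l ∈ I
    · rcases eq_or_ne k l with rfl | hkl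
      · obtain ⟨z, hz⟩ := W.side_nonempty (hnv k hk) (τ k)
        exact ⟨z, hz, hz⟩
      · exact (W.transverse_iff.1 (htr hk hl hkl)).2 _ _
    · rw [Set.inter_comm]
      exact this l k hl
  obtain ⟨i, hi, b, hsub⟩ := hσ.exists_side_subset_side hτ l
  obtain ⟨z, hzk, hzi⟩ := hσ.side_inter_side_nonempty htr hnv hk hi b
  exact ⟨z, hτ k hk ▸ hzk, hsub hzi⟩

theorem OrientedToward.spansCube (hσ : W.OrientedToward I σ) (hI : I.Finite)
    (htr : I.Pairwise W.Transverse) (hnv : ∀ i ∈ I, (W.U i).Nonempty ∧ (W.V i).Nonempty) :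
    W.SpansCube I σ := by
  intro τ hτ
  have : Finite I := hI.to_subtype
  choose y hy using fun p : I × Bool => W.side_nonempty (hnv p.1 p.1.2) p.2
  refine ⟨hσ.side_inter_side_nonempty_of_eq_outside htr hnv hτ,
    W.finite_setOf_notMem_side hI (Set.finite_range y) fun k hk => ?_⟩
  obtain ⟨i, hi, b, hsub⟩ := hσ k hk
  exact ⟨y (⟨i, hi⟩, b), Set.mem_range_self _,
    hτ k hk ▸ Set.sdiff_subset (hsub (hy (⟨i, hi⟩, b)))⟩

theorem SpansCube.isZeroCube_update [DecidableEq ι] (h : W.SpansCube I σ) {i : ι} (hi : i ∈ I)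
    (b : Bool) : W.IsZeroCube (Function.update σ i b) :=
  h _ fun _ hj => Function.update_of_ne (ne_of_mem_of_not_mem hi hj).symm _ _

theorem SpansCube.eq_of_not_transverse [DecidableEq ι] {σ' : ι → Bool} (h : W.SpansCube I σ)
    (h' : W.SpansCube I σ') {i j : ι} (hj : j ∉ I) (hi : i ∈ I) (hnt : ¬ W.Transverse j i) :
    σ j = σ' j := by
  by_contra hne
  have hji : j ≠ i := (ne_of_mem_of_not_mem hi hj).symm
  refine hnt (W.transverse_of_forall_isZeroCube hji fun c b => ?_)
  obtain rfl | rfl : c = σ j ∨ c = σ' j := by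
    rw [(Bool.eq_or_eq_not (σ' j) (σ j)).resolve_left (Ne.symm hne)]
    exact Bool.eq_or_eq_not c (σ j)
  · exact ⟨_, h.isZeroCube_update hi b, Function.update_of_ne hji _ _, Function.update_self _ _ _⟩
  · exact ⟨_, h'.isZeroCube_update hi b, Function.update_of_ne hji _ _, Function.update_self _ _ _⟩

end Wallspace

theorem maximal_transverse_family_spans_maximal_cube_general
    {X ι : Type*} (W : Wallspace X ι)
    (I : Finset ι)
    (htr : (I : Set ι).Pairwise W.Transverse)
    (hmax : ∀ j : ι, j ∉ I → ∃ i ∈ I, ¬ W.Transverse j i)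
    (hnv : ∀ i ∈ I, (W.U i).Nonempty ∧ (W.V i).Nonempty) :
    ∃ σ : ι → Bool,
      (∀ τ : ι → Bool, (∀ j ∉ I, τ j = σ j) → W.IsZeroCube τ) ∧
      ∀ σ' : ι → Bool,
        (∀ τ : ι → Bool, (∀ j ∉ I, τ j = σ' j) → W.IsZeroCube τ) →
        ∀ j ∉ I, σ' j = σ j := by
  obtain ⟨σ, hσ⟩ := W.exists_orientedToward (I := I) hmax
  have hcube : W.SpansCube I σ := hσ.spansCube I.finite_toSet htr hnv
  refine ⟨σ, hcube, fun σ' hσ' j hj => ?_⟩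
  obtain ⟨i, hi, hnt⟩ := hmax j hj
  classical
  exact (hcube.eq_of_not_transverse hσ' hj hi hnt).symm

/-- **Maximal transverse families span maximal cubes.**  Let `(X, W)` be a wallspace with
`X` nonempty, and let `I` be a finite maximal collection of pairwise transverse wall
indices, each of whose walls is nonvacuous.  Then there is an orientation `σ` of the walls
outside `I` such that every full orientation agreeing with `σ` outside `I` is a `0`-cube,
and `σ` is unique with this property; so `I` is the set of independent walls of a unique
(maximal) cube of the dual cube complex. -/
theorem maximal_transverse_family_spans_maximal_cube
    {X ι : Type*} [Nonempty X] (W : Wallspace X ι)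
    (I : Finset ι)
    (htr : (I : Set ι).Pairwise W.Transverse)
    (hmax : ∀ j : ι, j ∉ I → ∃ i ∈ I, ¬ W.Transverse j i)
    (hnv : ∀ i ∈ I, (W.U i).Nonempty ∧ (W.V i).Nonempty) :
    ∃ σ : ι → Bool,
      (∀ τ : ι → Bool, (∀ j ∉ I, τ j = σ j) → W.IsZeroCube τ) ∧
      ∀ σ' : ι → Bool,
        (∀ τ : ι → Bool, (∀ j ∉ I, τ j = σ' j) → W.IsZeroCube τ) →
        ∀ j ∉ I, σ' j = σ j :=
  maximal_transverse_family_spans_maximal_cube_general W I htr hmax hnv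
end

section
/- (Convexity of the subcomplex dual to a hemiwallspace) Let (X, W) be a wallspace. Let D be a set of wall indices together with a fixed orientation σ₀ assigning to each i ∈ D one of the ordered pairs (U i, V i) or (V i, U i) (a hemiwallspace); say a 0-cube c lies in C(𝒰) if c(i) = σ₀(i) for all i ∈ D. Let b₀, b₁, …, b_n be a combinatorial geodesic of 0-cubes (consecutive 0-cubes are adjacent, and no such path from b₀ to b_n has length less than n). Then for every k and every wall index i, b_k(i) = b₀(i) or b_k(i) = b_n(i). Consequently, if b₀ and b_n lie in C(𝒰) then every b_k lies in C(𝒰): C(𝒰) is convex in the dual cube complex. -/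
/-!
Along a combinatorial geodesic no wall is crossed twice. Suppose the wall `i` is crossed at
steps `u < v` with `v - u` minimal. Then between the two crossings every other wall is crossed
at most once, so each intermediate `0`-cube orients every wall `q ≠ i` as `b u` or as
`b (v + 1)` does, and both of these orient `i` the same way. Hence re-orienting `i` back in all
intermediate `0`-cubes again gives `0`-cubes, and they form a path from `b u` to `b (v + 1)`
that is two steps shorter than the original one.
-/

open Pointwise

section Sequences

variable {α : Type*}

theorem eq_of_forall_eq_succ {f : ℕ → α} {s t : ℕ} (hst : s ≤ t)
    (h : ∀ w, s ≤ w → w < t → f w = f (w + 1)) : f s = f t := by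
  induction t, hst using Nat.le_induction with
  | base => rfl
  | succ t hst ih =>
    exact (ih fun w hsw hwt => h w hsw (by omega)).trans (h t hst (by omega))

theorem exists_ne_succ_of_ne {f : ℕ → α} {s t : ℕ} (hst : s ≤ t) (h : f s ≠ f t) :
    ∃ w, s ≤ w ∧ w < t ∧ f w ≠ f (w + 1) := by
  by_contra! hc
  exact h (eq_of_forall_eq_succ hst hc)

theorem Bool.eq_or_eq_of_changes_at_most_once {f : ℕ → Bool} {s j t : ℕ}
    (hsj : s ≤ j) (hjt : j ≤ t)
    (h : ∀ w w', s ≤ w → w < w' → w' < t → f w ≠ f (w + 1) → f w' = f (w' + 1)) :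
    f j = f s ∨ f j = f t := by
  by_contra! hc
  obtain ⟨w, hsw, hwj, hw⟩ := exists_ne_succ_of_ne hsj (Ne.symm hc.1)
  obtain ⟨w', hjw', hw't, hw'⟩ := exists_ne_succ_of_ne hjt hc.2
  exact hw' (h w w' hsw (by omega) hw't hw)

end Sequences

section Update

variable {ι α : Type*} {c d : ι → α} {i : ι}

theorem eq_of_existsUnique_ne (h : ∃! q, c q ≠ d q) (hi : c i ≠ d i) {q : ι} (hq : q ≠ i) :
    c q = d q := by
  by_contra hne
  exact hq (h.unique hne hi)

theorem update_eq_of_existsUnique_ne [DecidableEq ι] (h : ∃! q, c q ≠ d q) (hi : c i ≠ d i) :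
    Function.update c i (d i) = d :=
  Function.update_eq_iff.2 ⟨rfl, fun _ hq => eq_of_existsUnique_ne h hi hq⟩

theorem existsUnique_update_ne [DecidableEq ι] (h : ∃! q, c q ≠ d q) (hi : c i = d i) (a : α) :
    ∃! q, Function.update c i a q ≠ Function.update d i a q := by
  convert h using 2 with q
  by_cases hq : q = i
  · subst hq
    simp [hi]
  · simp [hq]

end Update

namespace Wallspace

variable {X ι : Type*} (W : Wallspace X ι)

def IsCubePath (n : ℕ) (b : ℕ → ι → Bool) : Prop :=
  (∀ k ≤ n, W.IsZeroCube (b k)) ∧ ∀ k < n, ∃! i, b k i ≠ b (k + 1) i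

def HasCubePath (c d : ι → Bool) (n : ℕ) : Prop :=
  ∃ b, b 0 = c ∧ b n = d ∧ W.IsCubePath n b

variable {W}

theorem HasCubePath.append {c d e : ι → Bool} {m n : ℕ} (h₁ : W.HasCubePath c d m)
    (h₂ : W.HasCubePath d e n) : W.HasCubePath c e (m + n) := by
  obtain ⟨b₁, hb₁0, hb₁m, hcube₁, hadj₁⟩ := h₁
  obtain ⟨b₂, hb₂0, hb₂n, hcube₂, hadj₂⟩ := h₂
  set b : ℕ → ι → Bool := fun k => if k ≤ m then b₁ k else b₂ (k - m) with hb
  have hb₁ : ∀ k ≤ m, b k = b₁ k := fun k hk => if_pos hk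
  have hb₂ : ∀ k, m ≤ k → b k = b₂ (k - m) := by
    intro k hk
    rcases hk.eq_or_lt with rfl | hk
    · simp [hb, hb₁m, hb₂0]
    · simp [hb, not_le.2 hk]
  refine ⟨b, by rw [hb₁ 0 (Nat.zero_le m), hb₁0], by rw [hb₂ _ (by omega), Nat.add_sub_cancel_left,
    hb₂n], fun k hk => ?_, fun k hk => ?_⟩
  · rcases le_total k m with hkm | hkm
    · exact hb₁ k hkm ▸ hcube₁ k hkm
    · exact hb₂ k hkm ▸ hcube₂ _ (by omega)
  · rcases lt_or_ge k m with hkm | hkm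
    · rw [hb₁ k hkm.le, hb₁ (k + 1) hkm]
      exact hadj₁ k hkm
    · rw [hb₂ k hkm, hb₂ (k + 1) (by omega), show k + 1 - m = k - m + 1 by omega]
      exact hadj₂ _ (by omega)

theorem IsCubePath.hasCubePath {n : ℕ} {b : ℕ → ι → Bool} (hb : W.IsCubePath n b) {s t : ℕ}
    (hst : s ≤ t) (htn : t ≤ n) : W.HasCubePath (b s) (b t) (t - s) :=
  ⟨fun p => b (s + p), rfl, by simp only [Nat.add_sub_cancel' hst],
    fun k hk => hb.1 _ (by omega), fun k hk => hb.2 _ (by omega)⟩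

theorem IsZeroCube.update [DecidableEq ι] {c d e : ι → Bool} {i : ι} (hc : W.IsZeroCube c)
    (hd : W.IsZeroCube d) (he : W.IsZeroCube e) (hcd : c i = d i)
    (hbetween : ∀ q ≠ i, e q = c q ∨ e q = d q) :
    W.IsZeroCube (Function.update e i (c i)) := by
  have hmeet : ∀ q, (W.side i (c i) ∩ W.side q (Function.update e i (c i) q)).Nonempty := by
    intro q
    by_cases hq : q = i
    · subst hq
      simpa using hc.1 q q
    · rw [Function.update_of_ne hq]
      rcases hbetween q hq with h | h
      · exact h ▸ hc.1 i q
      · exact h ▸ hcd ▸ hd.1 i q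
  refine ⟨fun p q => ?_, fun x => ((he.2 x).insert i).subset fun q hq => ?_⟩
  · by_cases hp : p = i
    · subst hp
      simpa using hmeet q
    by_cases hq : q = i
    · subst hq
      simpa [Set.inter_comm] using hmeet p
    simpa [Function.update_of_ne hp, Function.update_of_ne hq] using he.1 p q
  · by_cases h : q = i
    · exact .inl h
    · exact .inr (by simpa [Function.update_of_ne h] using hq)

theorem IsCubePath.hasCubePath_shortcut {n : ℕ} {b : ℕ → ι → Bool} (hb : W.IsCubePath n b)
    {u v : ℕ} {i : ι} (huv : u < v) (hvn : v < n) (hu : b u i ≠ b (u + 1) i)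
    (hv : b v i ≠ b (v + 1) i)
    (hmin : ∀ w w' q, u ≤ w → w < w' → w' ≤ v → w' - w < v - u →
      b w q ≠ b (w + 1) q → b w' q = b (w' + 1) q) :
    W.HasCubePath (b u) (b (v + 1)) (v - u - 1) := by
  classical
  have hi_const : ∀ w, u < w → w < v → b w i = b (w + 1) i :=
    fun w huw hwv => hmin u w i le_rfl huw hwv.le (by omega) hu
  have hi_back : b (v + 1) i = b u i := by
    have h : b (u + 1) i = b v i :=
      eq_of_forall_eq_succ (f := fun k => b k i) huv fun w huw hwv => hi_const w huw hwv
    rw [h] at hu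
    exact (Bool.eq_not_iff.2 hv.symm).trans (Bool.eq_not_iff.2 hu).symm
  have hbetween : ∀ j, u < j → j ≤ v → ∀ q ≠ i, b j q = b u q ∨ b j q = b (v + 1) q := by
    intro j huj hjv q hq
    have h := Bool.eq_or_eq_of_changes_at_most_once (f := fun k => b k q) huj hjv
      fun w w' huw hww' hw'v => hmin w w' q (by omega) hww' hw'v.le (by omega)
    rwa [← eq_of_existsUnique_ne (hb.2 u (by omega)) hu hq,
      eq_of_existsUnique_ne (hb.2 v hvn) hv hq] at h
  refine ⟨fun p => Function.update (b (u + 1 + p)) i (b u i), ?_, ?_, fun k hk => ?_,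
    fun k hk => ?_⟩
  · exact update_eq_of_existsUnique_ne (by simpa only [ne_comm] using hb.2 u (by omega))
      (Ne.symm hu)
  · change Function.update (b (u + 1 + (v - u - 1))) i (b u i) = b (v + 1)
    rw [show u + 1 + (v - u - 1) = v by omega, ← hi_back]
    exact update_eq_of_existsUnique_ne (hb.2 v hvn) hv
  · exact (hb.1 u (by omega)).update (hb.1 (v + 1) (by omega)) (hb.1 _ (by omega))
      hi_back.symm (hbetween _ (by omega) (by omega))
  · exact existsUnique_update_ne (hb.2 _ (by omega)) (hi_const _ (by omega) (by omega)) _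

theorem IsCubePath.eq_of_ne_succ_of_ne_succ {n : ℕ} {b : ℕ → ι → Bool}
    (hb : W.IsCubePath n b) (hgeo : ∀ m, W.HasCubePath (b 0) (b n) m → n ≤ m) {u v : ℕ}
    {i : ι} (hu : b u i ≠ b (u + 1) i) (hv : b v i ≠ b (v + 1) i) (hun : u < n) (hvn : v < n) :
    u = v := by
  suffices h : ∀ d u v i, u + d = v → v < n →
      b u i ≠ b (u + 1) i → b v i ≠ b (v + 1) i → d = 0 by
    rcases le_total u v with huv | hvu
    · have := h (v - u) u v i (by omega) hvn hu hv
      omega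
    · have := h (u - v) v u i (by omega) hun hv hu
      omega
  intro d
  induction d using Nat.strong_induction_on with
  | _ d ih =>
    intro u v i hd hvn hu hv
    by_contra hd0
    have hshort := hb.hasCubePath_shortcut (by omega) hvn hu hv
      fun w w' q _ hww' _ hgap hw => by_contra fun hw' => by
        have := ih (w' - w) (by omega) w w' q (by omega) (by omega) hw hw'
        omega
    have := hgeo _ (((hb.hasCubePath (Nat.zero_le u) (by omega)).append hshort).append
      (hb.hasCubePath (by omega : v + 1 ≤ n) le_rfl))
    omega

end Wallspace

/-- **Convexity of the subcomplex dual to a hemiwallspace.**  Let `b 0, b 1, …, b n` be a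
combinatorial geodesic of `0`-cubes of the dual cube complex (consecutive `0`-cubes are
adjacent and no path of `0`-cubes from `b 0` to `b n` is shorter).  Then every `0`-cube on
the geodesic orients each wall as `b 0` does or as `b n` does.  Consequently, if `D` is a
set of wall indices with a fixed orientation `σ₀` (a hemiwallspace) and both endpoints lie
in the dual subcomplex `C(𝒰)` (agree with `σ₀` on `D`), then so does every `b k`:
`C(𝒰)` is convex. -/
theorem hemiwallspace_subcomplex_convex
    {X ι : Type*} (W : Wallspace X ι)
    (n : ℕ) (b : ℕ → ι → Bool)
    (hcube : ∀ k ≤ n, W.IsZeroCube (b k))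
    (hadj : ∀ k < n, ∃! i : ι, b k i ≠ b (k + 1) i)
    (hgeo : ∀ (m : ℕ) (b' : ℕ → ι → Bool),
      b' 0 = b 0 → b' m = b n →
      (∀ k ≤ m, W.IsZeroCube (b' k)) →
      (∀ k < m, ∃! i : ι, b' k i ≠ b' (k + 1) i) → n ≤ m) :
    (∀ k ≤ n, ∀ i : ι, b k i = b 0 i ∨ b k i = b n i) ∧
    ∀ (D : Set ι) (σ₀ : ι → Bool),
      (∀ i ∈ D, b 0 i = σ₀ i) → (∀ i ∈ D, b n i = σ₀ i) →
      ∀ k ≤ n, ∀ i ∈ D, b k i = σ₀ i := by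
  have hb : W.IsCubePath n b := ⟨hcube, hadj⟩
  have hgeo' : ∀ m, W.HasCubePath (b 0) (b n) m → n ≤ m :=
    fun m ⟨b', h0, hm, hcube', hadj'⟩ => hgeo m b' h0 hm hcube' hadj'
  have hside : ∀ k ≤ n, ∀ i : ι, b k i = b 0 i ∨ b k i = b n i :=
    fun k hk i => Bool.eq_or_eq_of_changes_at_most_once (f := fun k => b k i) (Nat.zero_le k) hk
      fun w w' _ hww' hw'n hw => by_contra fun hw' =>
        hww'.ne (hb.eq_of_ne_succ_of_ne_succ hgeo' hw hw' (hww'.trans hw'n) hw'n)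
  refine ⟨hside, fun D σ₀ h0 hn k hk i hi => ?_⟩
  rcases hside k hk i with h | h
  · rw [h, h0 i hi]
  · rw [h, hn i hi]
end

section
/- (Transverse walls meet, geometrically) Let X be a connected and locally connected topological space. Let W and W' be closed connected subsets of X such that X − W has exactly two connected components U and V, and X − W' has exactly two connected components U' and V'. Then W ∩ W' ≠ ∅ if and only if the associated walls are transverse, i.e., all four intersections (W ∪ U) ∩ (W' ∪ U'), (W ∪ U) ∩ (W' ∪ V'), (W ∪ V) ∩ (W' ∪ U'), and (W ∪ V) ∩ (W' ∪ V') are nonempty. -/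
/-!
If `Wl` and `Wr` are disjoint, then `Wr` is a connected subset of `X − Wl`, so it lies in one of
its two components; the other one, `A`, misses `Wr`. Likewise some component `A'` of `X − Wr`
misses `Wl`, and transversality forces `A` and `A'` to meet. Each of them is then contained in the
complement of both walls, so they are the same connected set. By local connectedness the closure
of a component of the complement of a closed set adds only points of that set, hence
`closure A ⊆ A ∪ (Wl ∩ Wr) = A`. So `A` is a nonempty proper clopen set, which is impossible in
the connected space `X`.
-/

open Set

section

variable {X : Type*} [TopologicalSpace X]

theorem connectedComponentIn_disjoint {F : Set X} {x y : X}
    (h : connectedComponentIn F x ≠ connectedComponentIn F y) :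
    Disjoint (connectedComponentIn F x) (connectedComponentIn F y) :=
  disjoint_left.2 fun _ hx hy =>
    h ((connectedComponentIn_eq hx).trans (connectedComponentIn_eq hy).symm)

theorem connectedComponentIn_subset_connectedComponentIn_of_subset {F G : Set X} {x : X}
    (h : connectedComponentIn F x ⊆ G) : connectedComponentIn F x ⊆ connectedComponentIn G x := by
  by_cases hx : x ∈ F
  · exact isPreconnected_connectedComponentIn.subset_connectedComponentIn
      (mem_connectedComponentIn hx) h
  · simp [connectedComponentIn_eq_empty hx]

theorem connectedComponentIn_eq_of_subset {F G : Set X} {x : X}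
    (hFG : connectedComponentIn F x ⊆ G) (hGF : connectedComponentIn G x ⊆ F) :
    connectedComponentIn F x = connectedComponentIn G x :=
  (connectedComponentIn_subset_connectedComponentIn_of_subset hFG).antisymm
    (connectedComponentIn_subset_connectedComponentIn_of_subset hGF)

theorem closure_connectedComponentIn_compl_subset [LocallyConnectedSpace X] {W : Set X}
    (hW : IsClosed W) (x : X) :
    closure (connectedComponentIn Wᶜ x) ⊆ connectedComponentIn Wᶜ x ∪ W := by
  intro z hz
  by_cases hzW : z ∈ W
  · exact .inr hzW
  obtain ⟨y, hyz, hyx⟩ := mem_closure_iff.1 hz _ hW.isOpen_compl.connectedComponentIn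
    (mem_connectedComponentIn hzW)
  rw [connectedComponentIn_eq hyx, ← connectedComponentIn_eq hyz]
  exact .inl (mem_connectedComponentIn hzW)

theorem isClopen_connectedComponentIn_compl_of_eq [LocallyConnectedSpace X] {Wl Wr : Set X}
    (hWl : IsClosed Wl) (hWr : IsClosed Wr) (hdisj : Disjoint Wl Wr) {x : X}
    (h : connectedComponentIn Wlᶜ x = connectedComponentIn Wrᶜ x) :
    IsClopen (connectedComponentIn Wlᶜ x) := by
  refine ⟨closure_subset_iff_isClosed.1 ?_, hWl.isOpen_compl.connectedComponentIn⟩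
  calc closure (connectedComponentIn Wlᶜ x)
      ⊆ (connectedComponentIn Wlᶜ x ∪ Wl) ∩ (connectedComponentIn Wlᶜ x ∪ Wr) :=
        subset_inter (closure_connectedComponentIn_compl_subset hWl x)
          (h ▸ closure_connectedComponentIn_compl_subset hWr x)
    _ = connectedComponentIn Wlᶜ x := by
        rw [← union_inter_distrib_left, hdisj.inter_eq, union_empty]

theorem disjoint_union_connectedComponentIn_compl [PreconnectedSpace X]
    [LocallyConnectedSpace X] {Wl Wr : Set X} (hWl : IsClosed Wl) (hWr : IsClosed Wr)
    (hne : Wl.Nonempty) (hdisj : Disjoint Wl Wr) {A A' : Set X}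
    (hA : ∃ a ∈ Wlᶜ, A = connectedComponentIn Wlᶜ a)
    (hA' : ∃ a' ∈ Wrᶜ, A' = connectedComponentIn Wrᶜ a')
    (hAr : Disjoint A Wr) (hA'l : Disjoint A' Wl) :
    Disjoint (Wl ∪ A) (Wr ∪ A') := by
  obtain ⟨a, -, rfl⟩ := hA
  obtain ⟨a', -, rfl⟩ := hA'
  have hAA' : Disjoint (connectedComponentIn Wlᶜ a) (connectedComponentIn Wrᶜ a') := by
    refine disjoint_left.2 fun x hxa hxa' => ?_
    rw [connectedComponentIn_eq hxa] at hAr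
    rw [connectedComponentIn_eq hxa'] at hA'l
    have hx : x ∈ connectedComponentIn Wlᶜ x :=
      mem_connectedComponentIn (connectedComponentIn_subset _ _ hxa)
    have hclopen := isClopen_connectedComponentIn_compl_of_eq hWl hWr hdisj
      (connectedComponentIn_eq_of_subset (subset_compl_iff_disjoint_right.2 hAr)
        (subset_compl_iff_disjoint_right.2 hA'l))
    rcases isClopen_iff.1 hclopen with hempty | huniv
    · exact (hempty ▸ hx : x ∈ (∅ : Set X))
    · obtain ⟨w, hw⟩ := hne
      exact connectedComponentIn_subset Wlᶜ x (huniv ▸ mem_univ w) hw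
  exact (hdisj.union_right hA'l.symm).union_left (hAr.union_right hAA')

theorem disjoint_or_disjoint_of_subset_compl {W S U V : Set X} (hUV : U ≠ V)
    (hU : ∃ u ∈ Wᶜ, U = connectedComponentIn Wᶜ u)
    (hV : ∃ v ∈ Wᶜ, V = connectedComponentIn Wᶜ v)
    (hcompl : ∀ x ∈ Wᶜ, connectedComponentIn Wᶜ x = U ∨ connectedComponentIn Wᶜ x = V)
    (hS : IsConnected S) (hSW : S ⊆ Wᶜ) :
    Disjoint U S ∨ Disjoint V S := by
  obtain ⟨s, hs⟩ := hS.nonempty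
  have hSsub := hS.isPreconnected.subset_connectedComponentIn hs hSW
  obtain ⟨u, -, rfl⟩ := hU
  obtain ⟨v, -, rfl⟩ := hV
  rcases hcompl s (hSW hs) with h | h
  · exact .inr ((connectedComponentIn_disjoint hUV).symm.mono_right (h ▸ hSsub))
  · exact .inl ((connectedComponentIn_disjoint hUV).mono_right (h ▸ hSsub))

end

/-- **Transverse walls meet, geometrically.**  Let `X` be a connected, locally connected
topological space, and let `Wl`, `Wr` be closed connected subsets such that `X − Wl` has
exactly two connected components `U`, `V` and `X − Wr` has exactly two connected components
`U'`, `V'`.  Then `Wl ∩ Wr ≠ ∅` if and only if the associated walls are transverse, i.e.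
all four intersections of closed halfspaces are nonempty. -/
theorem geometric_walls_meet_iff_transverse
    {X : Type*} [TopologicalSpace X] [ConnectedSpace X] [LocallyConnectedSpace X]
    (Wl Wr : Set X)
    (hWl : IsClosed Wl) (hWlc : IsConnected Wl)
    (hWr : IsClosed Wr) (hWrc : IsConnected Wr)
    (U V : Set X) (hUV : U ≠ V)
    (hU : ∃ u ∈ Wlᶜ, U = connectedComponentIn Wlᶜ u)
    (hV : ∃ v ∈ Wlᶜ, V = connectedComponentIn Wlᶜ v)
    (hcompl : ∀ x ∈ Wlᶜ, connectedComponentIn Wlᶜ x = U ∨ connectedComponentIn Wlᶜ x = V)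
    (U' V' : Set X) (hUV' : U' ≠ V')
    (hU' : ∃ u ∈ Wrᶜ, U' = connectedComponentIn Wrᶜ u)
    (hV' : ∃ v ∈ Wrᶜ, V' = connectedComponentIn Wrᶜ v)
    (hcompl' : ∀ x ∈ Wrᶜ, connectedComponentIn Wrᶜ x = U' ∨ connectedComponentIn Wrᶜ x = V') :
    (Wl ∩ Wr).Nonempty ↔
      (((Wl ∪ U) ∩ (Wr ∪ U')).Nonempty ∧ ((Wl ∪ U) ∩ (Wr ∪ V')).Nonempty ∧
       ((Wl ∪ V) ∩ (Wr ∪ U')).Nonempty ∧ ((Wl ∪ V) ∩ (Wr ∪ V')).Nonempty) := by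
  refine ⟨fun ⟨x, hl, hr⟩ => ⟨⟨x, .inl hl, .inl hr⟩, ⟨x, .inl hl, .inl hr⟩,
    ⟨x, .inl hl, .inl hr⟩, ⟨x, .inl hl, .inl hr⟩⟩, fun ⟨h₁, h₂, h₃, h₄⟩ => ?_⟩
  by_contra hmeet
  have hdisj : Disjoint Wl Wr := disjoint_iff_inter_eq_empty.2 (not_nonempty_iff_eq_empty.1 hmeet)
  have key {A A' : Set X} :=
    disjoint_union_connectedComponentIn_compl (A := A) (A' := A') hWl hWr hWlc.nonempty hdisj
  rcases disjoint_or_disjoint_of_subset_compl hUV hU hV hcompl hWrc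
      (subset_compl_iff_disjoint_left.2 hdisj) with hr | hr <;>
    rcases disjoint_or_disjoint_of_subset_compl hUV' hU' hV' hcompl' hWlc
      (subset_compl_iff_disjoint_left.2 hdisj.symm) with hl | hl
  · exact not_disjoint_iff_nonempty_inter.2 h₁ (key hU hU' hr hl)
  · exact not_disjoint_iff_nonempty_inter.2 h₂ (key hU hV' hr hl)
  · exact not_disjoint_iff_nonempty_inter.2 h₃ (key hV hU' hr hl)
  · exact not_disjoint_iff_nonempty_inter.2 h₄ (key hV hV' hr hl)
end
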